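/- arXiv:2512.00847 — 10 statements merged into one kernel-verified Lean document; each statement's English description precedes it below -/
import Mathlib

section
/- Fix a real σ > 0, an integer M ≥ 2, and interference amplitudes a₁, …, a_{M−1} ≥ 0. Then the conditional correct detection probability P_c(μ, a) = ∫_0^∞ f(r; μ, σ) · ∏_{j=1}^{M−1} (1 − Q₁(a_j/σ, r/σ)) dr is strictly increasing in the desired signal amplitude μ on [0, ∞): for all 0 ≤ μ₁ < μ₂ one has P_c(μ₁, a) < P_c(μ₂, a). -/
open MeasureTheory

/-- Modified Bessel function of the first kind of order zero, via its power series. -/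
noncomputable def besselI0 (x : ℝ) : ℝ :=
  ∑' k : ℕ, (x / 2) ^ (2 * k) / ((Nat.factorial k : ℝ)) ^ 2

/-- First-order Marcum Q-function. -/
noncomputable def marcumQ1 (a b : ℝ) : ℝ :=
  ∫ x in Set.Ioi b, x * Real.exp (-(x ^ 2 + a ^ 2) / 2) * besselI0 (a * x)

/-- Rician probability density with noncentrality `μ` and scale `σ`. -/
noncomputable def ricePdf (σ μ r : ℝ) : ℝ :=
  (r / σ ^ 2) * Real.exp (-(r ^ 2 + μ ^ 2) / (2 * σ ^ 2)) * besselI0 (r * μ / σ ^ 2)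

/-- Conditional correct detection probability. -/
noncomputable def Pc (σ : ℝ) (M : ℕ) (μ : ℝ) (a : Fin (M - 1) → ℝ) : ℝ :=
  ∫ r in Set.Ioi (0 : ℝ), ricePdf σ μ r * ∏ j, (1 - marcumQ1 (a j / σ) (r / σ))

namespace PcAux

open Set Filter

lemma term_eq (x : ℝ) (k : ℕ) :
    (x / 2) ^ (2 * k) / ((Nat.factorial k : ℝ)) ^ 2 = (x ^ 2 / 4) ^ k / ((Nat.factorial k : ℝ)) ^ 2 := by
  rw [pow_mul]
  congr 2
  ring

lemma term_nonneg (x : ℝ) (k : ℕ) :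
    0 ≤ (x / 2) ^ (2 * k) / ((Nat.factorial k : ℝ)) ^ 2 := by
  rw [term_eq]
  positivity

lemma summable_aux (t : ℝ) : Summable (fun k : ℕ => t ^ k / ((Nat.factorial k : ℝ)) ^ 2) := by
  apply Summable.of_norm
  refine Summable.of_nonneg_of_le (fun k => norm_nonneg _) ?_
    (Real.summable_pow_div_factorial |t|)
  intro k
  rw [Real.norm_eq_abs, abs_div, abs_pow, abs_pow, sq_abs]
  have h1 : (1 : ℝ) ≤ (Nat.factorial k : ℝ) := by
    exact_mod_cast Nat.one_le_iff_ne_zero.mpr (Nat.factorial_ne_zero k)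
  have h2 : (0:ℝ) < (Nat.factorial k : ℝ) := by linarith
  apply div_le_div_of_nonneg_left (by positivity) h2
  nlinarith

lemma summable_besselI0 (x : ℝ) :
    Summable (fun k : ℕ => (x / 2) ^ (2 * k) / ((Nat.factorial k : ℝ)) ^ 2) := by
  simp_rw [term_eq]
  exact summable_aux _

lemma besselI0_eq (x : ℝ) : besselI0 x = ∑' k : ℕ, (x ^ 2 / 4) ^ k / ((Nat.factorial k : ℝ)) ^ 2 := by
  unfold besselI0; simp_rw [term_eq]

lemma one_le_besselI0 (x : ℝ) : 1 ≤ besselI0 x := by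
  rw [besselI0_eq]
  have h := Summable.le_tsum (summable_aux (x ^ 2 / 4)) 0 (fun k _ => by positivity)
  simpa using h

lemma besselI0_pos (x : ℝ) : 0 < besselI0 x := lt_of_lt_of_le one_pos (one_le_besselI0 x)

lemma besselI0_nonneg (x : ℝ) : 0 ≤ besselI0 x := (besselI0_pos x).le

lemma measurable_besselI0 : Measurable besselI0 := by
  apply measurable_of_tendsto_metrizable
    (f := fun n x => ∑ k ∈ Finset.range n, (x / 2) ^ (2 * k) / ((Nat.factorial k : ℝ)) ^ 2)
  · intro n
    apply Finset.measurable_sum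
    intro k _
    exact ((measurable_id.div_const 2).pow_const _).div_const _
  · rw [tendsto_pi_nhds]
    intro x
    exact (summable_besselI0 x).hasSum.tendsto_sum_nat


lemma summable_norm_aux (t : ℝ) :
    Summable (fun k : ℕ => ‖t ^ k / ((Nat.factorial k : ℝ)) ^ 2‖) := by
  apply (summable_aux |t|).congr
  intro k
  simp [Real.norm_eq_abs, abs_div, abs_pow, Nat.abs_cast]

/-- sign helper -/
lemma sign_pair {x y u v : ℝ} (hy : 0 ≤ y) (hyx : y ≤ x) (hv : 0 ≤ v) (hvu : v ≤ u)
    (k l : ℕ) : 0 ≤ (x ^ k * y ^ l - x ^ l * y ^ k) * (u ^ k * v ^ l - u ^ l * v ^ k) := by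
  have hx : 0 ≤ x := hy.trans hyx
  have hu : 0 ≤ u := hv.trans hvu
  have key : ∀ (p q : ℝ), 0 ≤ q → q ≤ p → ∀ i j : ℕ, j ≤ i →
      p ^ j * q ^ j * q ^ (i - j) ≤ p ^ j * q ^ j * p ^ (i - j) := by
    intro p q hq hqp i j hji
    have hp : 0 ≤ p := hq.trans hqp
    apply mul_le_mul_of_nonneg_left (pow_le_pow_left₀ hq hqp _) (mul_nonneg (by positivity) (by positivity))
  have expand : ∀ (p q : ℝ), ∀ i j : ℕ, j ≤ i →
      p ^ i * q ^ j = p ^ j * q ^ j * p ^ (i - j) ∧ p ^ j * q ^ i = p ^ j * q ^ j * q ^ (i - j) := by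
    intro p q i j hji
    constructor
    · rw [mul_right_comm, ← pow_add]
      congr 2
      omega
    · rw [mul_assoc, ← pow_add]
      congr 2
      omega
  rcases le_total l k with hlk | hkl
  · apply mul_nonneg <;> rw [sub_nonneg]
    · rw [(expand x y k l hlk).1, (expand x y k l hlk).2]
      exact key x y hy hyx k l hlk
    · rw [(expand u v k l hlk).1, (expand u v k l hlk).2]
      exact key u v hv hvu k l hlk
  · rw [show (x ^ k * y ^ l - x ^ l * y ^ k) * (u ^ k * v ^ l - u ^ l * v ^ k)
      = (x ^ l * y ^ k - x ^ k * y ^ l) * (u ^ l * v ^ k - u ^ k * v ^ l) by ring]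
    apply mul_nonneg <;> rw [sub_nonneg]
    · rw [(expand x y l k hkl).1, (expand x y l k hkl).2]
      exact key x y hy hyx l k hkl
    · rw [(expand u v l k hkl).1, (expand u v l k hkl).2]
      exact key u v hv hvu l k hkl

/-- Product term. -/
noncomputable def F (s t : ℝ) (p : ℕ × ℕ) : ℝ :=
  (s ^ p.1 / ((Nat.factorial p.1 : ℝ)) ^ 2) * (t ^ p.2 / ((Nat.factorial p.2 : ℝ)) ^ 2)

/-- Antisymmetrized difference term. -/
noncomputable def D (u v x y : ℝ) (p : ℕ × ℕ) : ℝ :=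
  F (u * x) (v * y) p - F (u * y) (v * x) p

lemma D_add_swap (u v x y : ℝ) (k l : ℕ) :
    D u v x y (k, l) + D u v x y ((k, l) : ℕ × ℕ).swap =
      ((x ^ k * y ^ l - x ^ l * y ^ k) * (u ^ k * v ^ l - u ^ l * v ^ k)) /
        (((Nat.factorial k : ℝ)) ^ 2 * ((Nat.factorial l : ℝ)) ^ 2) := by
  have hk : ((Nat.factorial k : ℝ)) ^ 2 ≠ 0 := by positivity
  have hl : ((Nat.factorial l : ℝ)) ^ 2 ≠ 0 := by positivity
  simp only [D, F, Prod.swap_prod_mk]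
  field_simp
  ring

/-- Core total positivity inequality for the series E(t) = ∑ tᵏ/(k!)². -/
lemma E_TP2 {u v x y : ℝ} (hv : 0 < v) (hvu : v < u) (hy : 0 ≤ y) (hyx : y < x) :
    (∑' k : ℕ, (u * y) ^ k / ((Nat.factorial k : ℝ)) ^ 2) *
      (∑' k : ℕ, (v * x) ^ k / ((Nat.factorial k : ℝ)) ^ 2) <
    (∑' k : ℕ, (u * x) ^ k / ((Nat.factorial k : ℝ)) ^ 2) *
      (∑' k : ℕ, (v * y) ^ k / ((Nat.factorial k : ℝ)) ^ 2) := by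
  have hprod : ∀ s t : ℝ,
      (∑' k : ℕ, s ^ k / ((Nat.factorial k : ℝ)) ^ 2) *
        (∑' k : ℕ, t ^ k / ((Nat.factorial k : ℝ)) ^ 2) = ∑' p : ℕ × ℕ, F s t p := by
    intro s t
    rw [tsum_mul_tsum_of_summable_norm (summable_norm_aux s) (summable_norm_aux t)]
    exact tsum_congr fun p => rfl
  have hsumm : ∀ s t : ℝ, Summable (F s t) := by
    intro s t
    exact (summable_mul_of_summable_norm (summable_norm_aux s)
      (summable_norm_aux t)).congr fun p => rfl
  rw [hprod, hprod, ← sub_pos, ← Summable.tsum_sub (hsumm _ _) (hsumm _ _)]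
  have hDsumm : Summable (D u v x y) := (hsumm _ _).sub (hsumm _ _)
  have hswap : Summable (fun p : ℕ × ℕ => D u v x y p.swap) :=
    (Equiv.prodComm ℕ ℕ).summable_iff.mpr hDsumm
  have hswapsum : ∑' p : ℕ × ℕ, D u v x y p.swap = ∑' p, D u v x y p := by
    have := (Equiv.prodComm ℕ ℕ).tsum_eq (D u v x y)
    simpa using this
  have h2 : (2 : ℝ) * ∑' p, D u v x y p = ∑' p : ℕ × ℕ, (D u v x y p + D u v x y p.swap) := by
    rw [Summable.tsum_add hDsumm hswap, hswapsum]
    ring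
  have hpos : 0 < ∑' p : ℕ × ℕ, (D u v x y p + D u v x y p.swap) := by
    apply Summable.tsum_pos (hDsumm.add hswap) ?_ ((1, 0) : ℕ × ℕ)
    · rw [D_add_swap u v x y 1 0]
      simp only [pow_one, pow_zero, mul_one, one_mul, Nat.factorial_one, Nat.factorial_zero]
      rw [show ((1:ℕ):ℝ) ^ 2 * ((1:ℕ):ℝ) ^ 2 = 1 by norm_num, div_one]
      nlinarith
    · intro p
      obtain ⟨k, l⟩ := p
      rw [D_add_swap]
      apply div_nonneg (sign_pair hy hyx.le hv.le hvu.le k l) (by positivity)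
  have hfin : (0:ℝ) < ∑' p : ℕ × ℕ, D u v x y p := by linarith
  exact lt_of_lt_of_eq hfin (tsum_congr fun p => rfl)


/-- The Rician integral kernel. -/
noncomputable def ker (b m x : ℝ) : ℝ := x * Real.exp (-b * x ^ 2) * besselI0 (m * x)

lemma measurable_ker (b m : ℝ) : Measurable (ker b m) := by
  apply Measurable.mul
  · exact measurable_id.mul ((measurable_id.pow_const 2).const_mul (-b)).exp
  · exact measurable_besselI0.comp (measurable_id.const_mul m)

lemma integrableOn_pow_mul_exp {b : ℝ} (hb : 0 < b) (n : ℕ) :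
    IntegrableOn (fun x : ℝ => x ^ n * Real.exp (-b * x ^ 2)) (Ioi 0) := by
  have h := integrableOn_rpow_mul_exp_neg_mul_sq hb (s := (n : ℝ))
    (lt_of_lt_of_le neg_one_lt_zero (Nat.cast_nonneg n))
  apply h.congr_fun ?_ measurableSet_Ioi
  intro x hx
  simp only [Real.rpow_natCast]

lemma integral_pow_mul_exp {b : ℝ} (hb : 0 < b) (k : ℕ) :
    ∫ x in Ioi (0:ℝ), x ^ (2 * k + 1) * Real.exp (-b * x ^ 2)
      = (Nat.factorial k : ℝ) / (2 * b ^ (k + 1)) := by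
  have h1 : ∫ x in Ioi (0:ℝ), x ^ (2 * k + 1) * Real.exp (-b * x ^ 2)
      = ∫ x in Ioi (0:ℝ), x ^ ((2 * k + 1 : ℕ) : ℝ) * Real.exp (-b * x ^ ((2:ℕ):ℝ)) := by
    apply setIntegral_congr_fun measurableSet_Ioi
    intro x hx
    simp only [Real.rpow_natCast]
  rw [h1]
  have h2 := integral_rpow_mul_exp_neg_mul_rpow (p := ((2:ℕ):ℝ)) (q := ((2 * k + 1 : ℕ) : ℝ))
    (by norm_num) (lt_of_lt_of_le neg_one_lt_zero (Nat.cast_nonneg _)) hb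
  rw [h2]
  have h3 : (((2 * k + 1 : ℕ) : ℝ) + 1) / ((2:ℕ):ℝ) = (k : ℝ) + 1 := by
    push_cast; field_simp; ring
  rw [h3]
  have h4 : Real.Gamma ((k:ℝ) + 1) = (Nat.factorial k : ℝ) := by
    exact_mod_cast Real.Gamma_nat_eq_factorial k
  have h5 : b ^ (-(((2 * k + 1 : ℕ) : ℝ) + 1) / ((2:ℕ):ℝ)) = (b ^ (k+1) : ℝ)⁻¹ := by
    rw [show (-(((2 * k + 1 : ℕ) : ℝ) + 1) / ((2:ℕ):ℝ)) = -(((k+1:ℕ):ℝ)) by push_cast; ring,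
      Real.rpow_neg hb.le, Real.rpow_natCast]
  rw [h4, h5]
  have hbk : (0:ℝ) < b ^ (k+1) := by positivity
  field_simp
  ring

lemma ker_eq_tsum (b m : ℝ) (x : ℝ) :
    ker b m x = ∑' k : ℕ, (m ^ 2 / 4) ^ k / ((Nat.factorial k : ℝ)) ^ 2
      * (x ^ (2 * k + 1) * Real.exp (-b * x ^ 2)) := by
  rw [ker, besselI0_eq, mul_comm, ← tsum_mul_right]
  congr 1
  funext k
  rw [show ((m * x) ^ 2 / 4) ^ k = (m ^ 2 / 4) ^ k * (x ^ 2) ^ k by rw [← mul_pow]; congr 1; ring]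
  rw [show x ^ (2 * k + 1) = (x ^ 2) ^ k * x from by rw [pow_succ, pow_mul]]
  ring

lemma summable_coeff {b : ℝ} (hb : 0 < b) (m : ℝ) :
    Summable (fun k : ℕ => (m ^ 2 / 4) ^ k / ((Nat.factorial k : ℝ)) ^ 2
      * ((Nat.factorial k : ℝ) / (2 * b ^ (k + 1)))) := by
  have : ∀ k : ℕ, (m ^ 2 / 4) ^ k / ((Nat.factorial k : ℝ)) ^ 2
      * ((Nat.factorial k : ℝ) / (2 * b ^ (k + 1)))
      = (m ^ 2 / (4 * b)) ^ k / (Nat.factorial k : ℝ) * (1 / (2 * b)) := by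
    intro k
    have hfk : ((Nat.factorial k : ℝ)) ≠ 0 := by positivity
    field_simp
    rw [show m ^ 2 / (4 * b) = (m ^ 2 / 4) / b by ring, div_pow (m ^ 2 / 4) b k,
      div_eq_mul_inv ((m ^ 2 / 4) ^ k), pow_succ]
    have hbk : b ^ k ≠ 0 := by positivity
    rw [pow_succ b k, mul_comm (b ^ k) b, mul_assoc, mul_left_comm (b ^ k), mul_inv_cancel₀ hbk]
    ring
  simp_rw [this]
  apply Summable.mul_right
  exact Real.summable_pow_div_factorial _

lemma tsum_coeff {b : ℝ} (hb : 0 < b) (m : ℝ) :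
    ∑' k : ℕ, (m ^ 2 / 4) ^ k / ((Nat.factorial k : ℝ)) ^ 2
      * ((Nat.factorial k : ℝ) / (2 * b ^ (k + 1)))
      = Real.exp (m ^ 2 / (4 * b)) / (2 * b) := by
  have : ∀ k : ℕ, (m ^ 2 / 4) ^ k / ((Nat.factorial k : ℝ)) ^ 2
      * ((Nat.factorial k : ℝ) / (2 * b ^ (k + 1)))
      = (m ^ 2 / (4 * b)) ^ k / (Nat.factorial k : ℝ) * (1 / (2 * b)) := by
    intro k
    have hfk : ((Nat.factorial k : ℝ)) ≠ 0 := by positivity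
    field_simp
    rw [show m ^ 2 / (4 * b) = (m ^ 2 / 4) / b by ring, div_pow (m ^ 2 / 4) b k,
      div_eq_mul_inv ((m ^ 2 / 4) ^ k), pow_succ]
    have hbk : b ^ k ≠ 0 := by positivity
    rw [pow_succ b k, mul_comm (b ^ k) b, mul_assoc, mul_left_comm (b ^ k), mul_inv_cancel₀ hbk]
    ring
  simp_rw [this]
  rw [tsum_mul_right]
  have hexp : ∑' k : ℕ, (m ^ 2 / (4 * b)) ^ k / (Nat.factorial k : ℝ)
      = Real.exp (m ^ 2 / (4 * b)) := by
    rw [Real.exp_eq_exp_ℝ, NormedSpace.exp_eq_tsum_div]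
  rw [hexp]
  ring


/-- The summand functions. -/
noncomputable def kerTerm (b m : ℝ) (k : ℕ) (x : ℝ) : ℝ :=
  (m ^ 2 / 4) ^ k / ((Nat.factorial k : ℝ)) ^ 2 * (x ^ (2 * k + 1) * Real.exp (-b * x ^ 2))

lemma kerTerm_integrableOn {b : ℝ} (hb : 0 < b) (m : ℝ) (k : ℕ) :
    IntegrableOn (kerTerm b m k) (Ioi 0) := by
  unfold kerTerm
  exact (integrableOn_pow_mul_exp hb (2 * k + 1)).const_mul _

lemma kerTerm_nonneg {b m : ℝ} (k : ℕ) {x : ℝ} (hx : 0 ≤ x) : 0 ≤ kerTerm b m k x := by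
  unfold kerTerm; positivity

lemma kerTerm_integral {b : ℝ} (hb : 0 < b) (m : ℝ) (k : ℕ) :
    ∫ x in Ioi (0:ℝ), kerTerm b m k x
      = (m ^ 2 / 4) ^ k / ((Nat.factorial k : ℝ)) ^ 2
        * ((Nat.factorial k : ℝ) / (2 * b ^ (k + 1))) := by
  unfold kerTerm
  rw [integral_const_mul, integral_pow_mul_exp hb k]

lemma kerTerm_lintegral {b : ℝ} (hb : 0 < b) (m : ℝ) (k : ℕ) :
    ∫⁻ x in Ioi (0:ℝ), ENNReal.ofReal (kerTerm b m k x)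
      = ENNReal.ofReal ((m ^ 2 / 4) ^ k / ((Nat.factorial k : ℝ)) ^ 2
        * ((Nat.factorial k : ℝ) / (2 * b ^ (k + 1)))) := by
  rw [← kerTerm_integral hb m k,
    ← ofReal_integral_eq_lintegral_ofReal (kerTerm_integrableOn hb m k)]
  filter_upwards [ae_restrict_mem measurableSet_Ioi] with x hx
  exact kerTerm_nonneg k (le_of_lt hx)

lemma kerTerm_measurable (b m : ℝ) (k : ℕ) : Measurable (kerTerm b m k) := by
  unfold kerTerm
  exact (((measurable_id.pow_const _).mul
    ((measurable_id.pow_const 2).const_mul (-b)).exp).const_mul _)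

lemma lintegral_ker {b : ℝ} (hb : 0 < b) (m : ℝ) :
    ∫⁻ x in Ioi (0:ℝ), ENNReal.ofReal (ker b m x)
      = ENNReal.ofReal (Real.exp (m ^ 2 / (4 * b)) / (2 * b)) := by
  have h1 : ∀ x ∈ Ioi (0:ℝ), ENNReal.ofReal (ker b m x)
      = ∑' k : ℕ, ENNReal.ofReal (kerTerm b m k x) := by
    intro x hx
    rw [ker_eq_tsum b m x]
    exact ENNReal.ofReal_tsum_of_nonneg (fun k => kerTerm_nonneg k (le_of_lt hx))
      ((summable_aux (m^2/4 * x^2)).mul_right (x * Real.exp (-b * x^2))|>.congr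
        (fun k => by rw [mul_pow, ← pow_mul,
          show x ^ (2*k+1) = x ^ (2*k) * x from pow_succ x (2*k)]; ring))
  rw [setLIntegral_congr_fun measurableSet_Ioi h1, lintegral_tsum
    (fun k => ((kerTerm_measurable b m k).ennreal_ofReal).aemeasurable)]
  simp_rw [kerTerm_lintegral hb m]
  rw [← ENNReal.ofReal_tsum_of_nonneg (fun k => by positivity) (summable_coeff hb m),
    tsum_coeff hb m]

lemma ker_integrableOn {b : ℝ} (hb : 0 < b) (m : ℝ) :
    IntegrableOn (ker b m) (Ioi 0) := by
  constructor
  · exact (measurable_ker b m).aestronglyMeasurable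
  · rw [hasFiniteIntegral_iff_norm]
    have : ∀ x ∈ Ioi (0:ℝ), ENNReal.ofReal ‖ker b m x‖ = ENNReal.ofReal (ker b m x) := by
      intro x hx
      rw [Real.norm_eq_abs, abs_of_nonneg]
      have h0 : (0:ℝ) < x := hx
      unfold ker
      have := besselI0_nonneg (m * x)
      positivity
    rw [setLIntegral_congr_fun measurableSet_Ioi this, lintegral_ker hb m]
    exact ENNReal.ofReal_lt_top

lemma ker_integral {b : ℝ} (hb : 0 < b) (m : ℝ) :
    ∫ x in Ioi (0:ℝ), ker b m x = Real.exp (m ^ 2 / (4 * b)) / (2 * b) := by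
  have hnn : 0 ≤ᵐ[volume.restrict (Ioi (0:ℝ))] ker b m := by
    filter_upwards [ae_restrict_mem measurableSet_Ioi] with x hx
    have h0 : (0:ℝ) < x := hx
    unfold ker
    have := besselI0_nonneg (m * x)
    positivity
  have := ofReal_integral_eq_lintegral_ofReal (ker_integrableOn hb m) hnn
  rw [lintegral_ker hb m] at this
  have hpos : (0:ℝ) ≤ Real.exp (m ^ 2 / (4 * b)) / (2 * b) := by positivity
  have hint : (0:ℝ) ≤ ∫ x in Ioi (0:ℝ), ker b m x := integral_nonneg_of_ae hnn
  exact (ENNReal.ofReal_eq_ofReal_iff hint hpos).mp this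


/-! ### Marcum Q function -/

noncomputable def phi (a x : ℝ) : ℝ := x * Real.exp (-(x ^ 2 + a ^ 2) / 2) * besselI0 (a * x)

lemma phi_eq (a x : ℝ) : phi a x = Real.exp (-(a ^ 2) / 2) * ker (1/2) a x := by
  unfold phi ker
  rw [show -(x ^ 2 + a ^ 2) / 2 = (-(1/2) * x ^ 2) + (-(a ^ 2) / 2) by ring, Real.exp_add]
  ring

lemma phi_funext (a : ℝ) : phi a = fun x => Real.exp (-(a ^ 2) / 2) * ker (1/2) a x :=
  funext (phi_eq a)

lemma phi_integrableOn (a : ℝ) : IntegrableOn (phi a) (Set.Ioi 0) := by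
  rw [phi_funext]
  exact (ker_integrableOn one_half_pos a).const_mul _

lemma phi_nonneg (a : ℝ) {x : ℝ} (hx : 0 ≤ x) : 0 ≤ phi a x := by
  unfold phi
  have := (besselI0_pos (a * x)).le
  positivity

lemma phi_pos (a : ℝ) {x : ℝ} (hx : 0 < x) : 0 < phi a x := by
  unfold phi
  have := besselI0_pos (a * x)
  positivity

lemma marcumQ1_def' (a b : ℝ) : marcumQ1 a b = ∫ x in Set.Ioi b, phi a x := rfl

lemma marcumQ1_zero (a : ℝ) : marcumQ1 a 0 = 1 := by
  rw [marcumQ1_def']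
  simp_rw [phi_eq]
  rw [integral_const_mul, ker_integral one_half_pos a]
  rw [show a ^ 2 / (4 * (1/2 : ℝ)) = a ^ 2 / 2 by norm_num,
    show (2 * (1/2 : ℝ)) = 1 by norm_num, div_one, ← Real.exp_add]
  rw [show -(a ^ 2) / 2 + a ^ 2 / 2 = 0 by ring, Real.exp_zero]

lemma marcumQ1_diff (a : ℝ) {b₁ b₂ : ℝ} (h0 : 0 ≤ b₁) (h12 : b₁ ≤ b₂) :
    marcumQ1 a b₁ = (∫ x in Set.Ioc b₁ b₂, phi a x) + marcumQ1 a b₂ := by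
  rw [marcumQ1_def', marcumQ1_def', ← Set.Ioc_union_Ioi_eq_Ioi h12]
  apply setIntegral_union (Set.Ioc_disjoint_Ioi le_rfl) measurableSet_Ioi
  · exact (phi_integrableOn a).mono_set (fun x hx => lt_of_lt_of_le (lt_of_le_of_lt h0 hx.1) le_rfl)
  · exact (phi_integrableOn a).mono_set (fun x hx =>
      lt_of_le_of_lt h0 (lt_of_le_of_lt h12 hx))

lemma marcumQ1_antitone (a : ℝ) {b₁ b₂ : ℝ} (h0 : 0 ≤ b₁) (h12 : b₁ ≤ b₂) :
    marcumQ1 a b₂ ≤ marcumQ1 a b₁ := by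
  rw [marcumQ1_diff a h0 h12]
  have : 0 ≤ ∫ x in Set.Ioc b₁ b₂, phi a x :=
    setIntegral_nonneg measurableSet_Ioc (fun x hx => phi_nonneg a (h0.trans hx.1.le))
  linarith

lemma marcumQ1_strict_anti (a : ℝ) {b₁ b₂ : ℝ} (h0 : 0 ≤ b₁) (h12 : b₁ < b₂) :
    marcumQ1 a b₂ < marcumQ1 a b₁ := by
  rw [marcumQ1_diff a h0 h12.le]
  have hpos : 0 < ∫ x in Set.Ioc b₁ b₂, phi a x := by
    have hInt : IntegrableOn (phi a) (Set.Ioc b₁ b₂) :=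
      (phi_integrableOn a).mono_set (fun x hx => lt_of_le_of_lt h0 hx.1)
    rw [setIntegral_pos_iff_support_of_nonneg_ae ?_ hInt]
    · calc (0:ENNReal) < volume (Set.Ioc b₁ b₂) := by
            rw [Real.volume_Ioc]; exact ENNReal.ofReal_pos.mpr (by linarith)
        _ ≤ volume (Function.support (phi a) ∩ Set.Ioc b₁ b₂) :=
            measure_mono (fun x hx => ⟨(phi_pos a (lt_of_le_of_lt h0 hx.1)).ne', hx⟩)
    · filter_upwards [ae_restrict_mem measurableSet_Ioc] with x hx
      exact phi_nonneg a (h0.trans hx.1.le)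
  linarith

lemma marcumQ1_nonneg (a : ℝ) {b : ℝ} (hb : 0 ≤ b) : 0 ≤ marcumQ1 a b :=
  setIntegral_nonneg measurableSet_Ioi (fun x hx => phi_nonneg a (hb.trans (le_of_lt hx)))

lemma marcumQ1_le_one (a : ℝ) {b : ℝ} (hb : 0 ≤ b) : marcumQ1 a b ≤ 1 := by
  rw [← marcumQ1_zero a]
  exact marcumQ1_antitone a le_rfl hb

lemma marcumQ1_lt_one (a : ℝ) {b : ℝ} (hb : 0 < b) : marcumQ1 a b < 1 := by
  rw [← marcumQ1_zero a]
  exact marcumQ1_strict_anti a le_rfl hb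

/-! ### Rice pdf -/

lemma ricePdf_eq {σ : ℝ} (hσ : 0 < σ) (μ r : ℝ) :
    ricePdf σ μ r = (1 / σ ^ 2 * Real.exp (-(μ ^ 2) / (2 * σ ^ 2)))
      * ker (1 / (2 * σ ^ 2)) (μ / σ ^ 2) r := by
  have hσ2 : (σ : ℝ) ^ 2 ≠ 0 := by positivity
  unfold ricePdf ker
  rw [show -(r ^ 2 + μ ^ 2) / (2 * σ ^ 2)
      = (-(1 / (2 * σ ^ 2)) * r ^ 2) + (-(μ ^ 2) / (2 * σ ^ 2)) by field_simp; ring,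
    Real.exp_add, show μ / σ ^ 2 * r = r * μ / σ ^ 2 by ring]
  ring

lemma ricePdf_integrableOn {σ : ℝ} (hσ : 0 < σ) (μ : ℝ) :
    IntegrableOn (ricePdf σ μ) (Set.Ioi 0) := by
  have : ricePdf σ μ = fun r => (1 / σ ^ 2 * Real.exp (-(μ ^ 2) / (2 * σ ^ 2)))
      * ker (1 / (2 * σ ^ 2)) (μ / σ ^ 2) r := funext (ricePdf_eq hσ μ)
  rw [this]
  exact (ker_integrableOn (by positivity) _).const_mul _

lemma ricePdf_integral_one {σ : ℝ} (hσ : 0 < σ) (μ : ℝ) :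
    ∫ r in Set.Ioi (0:ℝ), ricePdf σ μ r = 1 := by
  have hσ2 : (σ : ℝ) ^ 2 ≠ 0 := by positivity
  rw [setIntegral_congr_fun measurableSet_Ioi (fun r _ => ricePdf_eq hσ μ r),
    integral_const_mul, ker_integral (by positivity) _]
  rw [show (μ / σ ^ 2) ^ 2 / (4 * (1 / (2 * σ ^ 2))) = μ ^ 2 / (2 * σ ^ 2) by
      field_simp; ring,
    show 2 * (1 / (2 * σ ^ 2)) = 1 / σ ^ 2 by field_simp]
  rw [show 1 / σ ^ 2 * Real.exp (-μ ^ 2 / (2 * σ ^ 2))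
      * (Real.exp (μ ^ 2 / (2 * σ ^ 2)) / (1 / σ ^ 2))
      = (Real.exp (-μ ^ 2 / (2 * σ ^ 2)) * Real.exp (μ ^ 2 / (2 * σ ^ 2)))
        * (1 / σ ^ 2 * (1 / σ ^ 2)⁻¹) from by ring,
    ← Real.exp_add, mul_inv_cancel₀ (by positivity : (1:ℝ) / σ ^ 2 ≠ 0)]
  rw [show -μ ^ 2 / (2 * σ ^ 2) + μ ^ 2 / (2 * σ ^ 2) = 0 by ring, Real.exp_zero, mul_one]

lemma ricePdf_pos {σ : ℝ} (hσ : 0 < σ) (μ : ℝ) {r : ℝ} (hr : 0 < r) :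
    0 < ricePdf σ μ r := by
  unfold ricePdf
  have := besselI0_pos (r * μ / σ ^ 2)
  positivity

lemma ricePdf_nonneg {σ : ℝ} (hσ : 0 < σ) (μ : ℝ) {r : ℝ} (hr : 0 ≤ r) :
    0 ≤ ricePdf σ μ r := by
  unfold ricePdf
  have := (besselI0_pos (r * μ / σ ^ 2)).le
  positivity

lemma besselI0_TP2 {σ r s μ₁ μ₂ : ℝ} (hσ : 0 < σ) (hs : 0 < s) (hsr : s < r)
    (hμ₁ : 0 ≤ μ₁) (h12 : μ₁ < μ₂) :
    besselI0 (r * μ₁ / σ ^ 2) * besselI0 (s * μ₂ / σ ^ 2)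
      < besselI0 (r * μ₂ / σ ^ 2) * besselI0 (s * μ₁ / σ ^ 2) := by
  have hσ2 : (σ : ℝ) ^ 2 ≠ 0 := by positivity
  rw [besselI0_eq, besselI0_eq, besselI0_eq, besselI0_eq]
  rw [show (r * μ₁ / σ ^ 2) ^ 2 / 4 = (r ^ 2 / (4 * σ ^ 4)) * (μ₁ ^ 2) by field_simp,
    show (s * μ₂ / σ ^ 2) ^ 2 / 4 = (s ^ 2 / (4 * σ ^ 4)) * (μ₂ ^ 2) by field_simp,
    show (r * μ₂ / σ ^ 2) ^ 2 / 4 = (r ^ 2 / (4 * σ ^ 4)) * (μ₂ ^ 2) by field_simp,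
    show (s * μ₁ / σ ^ 2) ^ 2 / 4 = (s ^ 2 / (4 * σ ^ 4)) * (μ₁ ^ 2) by field_simp]
  apply E_TP2
  · positivity
  · rw [div_lt_div_iff₀ (by positivity) (by positivity)]
    have hs2 : s ^ 2 < r ^ 2 := by nlinarith
    have h4 : (0:ℝ) < 4 * σ ^ 4 := by positivity
    exact mul_lt_mul_of_pos_right hs2 h4
  · positivity
  · nlinarith

lemma ricePdf_TP2 {σ : ℝ} (hσ : 0 < σ) {r s μ₁ μ₂ : ℝ} (hs : 0 < s) (hsr : s < r)
    (hμ₁ : 0 ≤ μ₁) (h12 : μ₁ < μ₂) :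
    ricePdf σ μ₁ r * ricePdf σ μ₂ s < ricePdf σ μ₂ r * ricePdf σ μ₁ s := by
  have hr : 0 < r := hs.trans hsr
  have hσ2 : (0:ℝ) < σ ^ 2 := by positivity
  unfold ricePdf
  have hK : ∀ μ ν : ℝ, Real.exp (-(r ^ 2 + μ ^ 2) / (2 * σ ^ 2))
      * Real.exp (-(s ^ 2 + ν ^ 2) / (2 * σ ^ 2))
      = Real.exp (-(r ^ 2 + s ^ 2 + μ ^ 2 + ν ^ 2) / (2 * σ ^ 2)) := by
    intro μ ν
    rw [← Real.exp_add]
    congr 1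
    field_simp
    ring
  have key := besselI0_TP2 hσ hs hsr hμ₁ h12
  have hE : 0 < Real.exp (-(r ^ 2 + s ^ 2 + μ₁ ^ 2 + μ₂ ^ 2) / (2 * σ ^ 2)) := Real.exp_pos _
  calc r / σ ^ 2 * Real.exp (-(r ^ 2 + μ₁ ^ 2) / (2 * σ ^ 2)) * besselI0 (r * μ₁ / σ ^ 2)
        * (s / σ ^ 2 * Real.exp (-(s ^ 2 + μ₂ ^ 2) / (2 * σ ^ 2)) * besselI0 (s * μ₂ / σ ^ 2))
      = (r / σ ^ 2) * (s / σ ^ 2) * Real.exp (-(r ^ 2 + s ^ 2 + μ₁ ^ 2 + μ₂ ^ 2) / (2 * σ ^ 2))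
        * (besselI0 (r * μ₁ / σ ^ 2) * besselI0 (s * μ₂ / σ ^ 2)) := by
        rw [← hK μ₁ μ₂]; ring
    _ < (r / σ ^ 2) * (s / σ ^ 2) * Real.exp (-(r ^ 2 + s ^ 2 + μ₁ ^ 2 + μ₂ ^ 2) / (2 * σ ^ 2))
        * (besselI0 (r * μ₂ / σ ^ 2) * besselI0 (s * μ₁ / σ ^ 2)) := by
        apply mul_lt_mul_of_pos_left key
        positivity
    _ = r / σ ^ 2 * Real.exp (-(r ^ 2 + μ₂ ^ 2) / (2 * σ ^ 2)) * besselI0 (r * μ₂ / σ ^ 2)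
        * (s / σ ^ 2 * Real.exp (-(s ^ 2 + μ₁ ^ 2) / (2 * σ ^ 2)) * besselI0 (s * μ₁ / σ ^ 2)) := by
        rw [show -(r ^ 2 + s ^ 2 + μ₁ ^ 2 + μ₂ ^ 2) = -(r ^ 2 + s ^ 2 + μ₂ ^ 2 + μ₁ ^ 2)
          from by ring, ← hK μ₂ μ₁]
        ring


end PcAux

open PcAux

/-- The CCDP is strictly increasing in the desired signal amplitude `μ`. -/
theorem Pc_strictMono_in_mu (σ : ℝ) (hσ : 0 < σ) (M : ℕ) (hM : 2 ≤ M)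
    (a : Fin (M - 1) → ℝ) (ha : ∀ j, 0 ≤ a j)
    (μ₁ μ₂ : ℝ) (hμ₁ : 0 ≤ μ₁) (h : μ₁ < μ₂) :
    Pc σ M μ₁ a < Pc σ M μ₂ a := by
  classical
  -- the monotone bounded factor
  set G : ℝ → ℝ := fun r => ∏ j, (1 - marcumQ1 (a j / σ) (max (r / σ) 0)) with hGdef
  have hfac_mono : ∀ j : Fin (M - 1), Monotone (fun r => 1 - marcumQ1 (a j / σ) (max (r / σ) 0)) := by
    intro j r₁ r₂ hr
    have h1 : (0:ℝ) ≤ max (r₁ / σ) 0 := le_max_right _ _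
    have h2 : max (r₁ / σ) 0 ≤ max (r₂ / σ) 0 :=
      max_le_max (div_le_div_of_nonneg_right hr hσ.le) le_rfl
    have := marcumQ1_antitone (a j / σ) h1 h2
    linarith
  have hGmeas : Measurable G := by
    apply Finset.measurable_prod
    intro j _
    exact (hfac_mono j).measurable
  have hG0 : ∀ r, 0 ≤ G r := by
    intro r
    apply Finset.prod_nonneg
    intro j _
    have := marcumQ1_le_one (a j / σ) (le_max_right (r / σ) 0)
    linarith
  have hG1 : ∀ r, G r ≤ 1 := by
    intro r
    apply Finset.prod_le_one
    · intro j _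
      have := marcumQ1_le_one (a j / σ) (le_max_right (r / σ) 0)
      linarith
    · intro j _
      have := marcumQ1_nonneg (a j / σ) (le_max_right (r / σ) 0)
      linarith
  have hmax : ∀ {r : ℝ}, 0 < r → max (r / σ) 0 = r / σ := by
    intro r hr
    exact max_eq_left (by positivity)
  have hGpos : ∀ {r : ℝ}, 0 < r → 0 < G r := by
    intro r hr
    apply Finset.prod_pos
    intro j _
    have := marcumQ1_lt_one (a j / σ) (show 0 < max (r / σ) 0 by rw [hmax hr]; positivity)
    linarith
  have hGmono : ∀ {s r : ℝ}, 0 < s → s < r → G s < G r := by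
    intro s r hs hsr
    have hne : (Finset.univ : Finset (Fin (M - 1))).Nonempty := by
      have : 0 < M - 1 := by omega
      exact ⟨⟨0, this⟩, Finset.mem_univ _⟩
    apply Finset.prod_lt_prod_of_nonempty ?_ ?_ hne
    · intro j _
      have := marcumQ1_lt_one (a j / σ) (show 0 < max (s / σ) 0 by rw [hmax hs]; positivity)
      linarith
    · intro j _
      have hQ : marcumQ1 (a j / σ) (max (r / σ) 0) < marcumQ1 (a j / σ) (max (s / σ) 0) := by
        rw [hmax hs, hmax (hs.trans hsr)]
        exact marcumQ1_strict_anti (a j / σ) (by positivity) (by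
          apply div_lt_div_of_pos_right hsr hσ)
      linarith
  -- rewriting Pc
  have hPc : ∀ μ : ℝ, Pc σ M μ a = ∫ r in Set.Ioi (0:ℝ), G r * ricePdf σ μ r := by
    intro μ
    unfold Pc
    apply setIntegral_congr_fun measurableSet_Ioi
    intro r hr
    rw [hGdef]
    simp only []
    rw [mul_comm]
    congr 1
    apply Finset.prod_congr rfl
    intro j _
    rw [hmax hr]
  -- measure-theoretic setup
  set ν : Measure ℝ := volume.restrict (Set.Ioi 0) with hν
  have hf₁ : Integrable (ricePdf σ μ₁) ν := ricePdf_integrableOn hσ μ₁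
  have hf₂ : Integrable (ricePdf σ μ₂) ν := ricePdf_integrableOn hσ μ₂
  have hGb : ∃ C, ∀ r, ‖G r‖ ≤ C := ⟨1, fun r => by
    rw [Real.norm_eq_abs, abs_of_nonneg (hG0 r)]; exact hG1 r⟩
  have hGaesm : AEStronglyMeasurable G ν := hGmeas.aestronglyMeasurable
  have hH₁ : Integrable (fun r => G r * ricePdf σ μ₁ r) ν := hf₁.bdd_mul hGaesm (ae_of_all _ hGb.choose_spec)
  have hH₂ : Integrable (fun r => G r * ricePdf σ μ₂ r) ν := hf₂.bdd_mul hGaesm (ae_of_all _ hGb.choose_spec)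
  -- the symmetrized double integral
  set W : ℝ × ℝ → ℝ := fun p =>
    (ricePdf σ μ₂ p.1 * ricePdf σ μ₁ p.2 - ricePdf σ μ₁ p.1 * ricePdf σ μ₂ p.2)
      * (G p.1 - G p.2) with hWdef
  have hWeq : W = fun p =>
      (G p.1 * ricePdf σ μ₂ p.1) * ricePdf σ μ₁ p.2
        - ricePdf σ μ₂ p.1 * (G p.2 * ricePdf σ μ₁ p.2)
        - (G p.1 * ricePdf σ μ₁ p.1) * ricePdf σ μ₂ p.2
        + ricePdf σ μ₁ p.1 * (G p.2 * ricePdf σ μ₂ p.2) := by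
    funext p
    rw [hWdef]
    ring
  have hT1 : Integrable (fun p : ℝ × ℝ => (G p.1 * ricePdf σ μ₂ p.1) * ricePdf σ μ₁ p.2)
      (ν.prod ν) := hH₂.mul_prod hf₁
  have hT2 : Integrable (fun p : ℝ × ℝ => ricePdf σ μ₂ p.1 * (G p.2 * ricePdf σ μ₁ p.2))
      (ν.prod ν) := hf₂.mul_prod hH₁
  have hT3 : Integrable (fun p : ℝ × ℝ => (G p.1 * ricePdf σ μ₁ p.1) * ricePdf σ μ₂ p.2)
      (ν.prod ν) := hH₁.mul_prod hf₂
  have hT4 : Integrable (fun p : ℝ × ℝ => ricePdf σ μ₁ p.1 * (G p.2 * ricePdf σ μ₂ p.2))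
      (ν.prod ν) := hf₁.mul_prod hH₂
  have hWint : Integrable W (ν.prod ν) := by
    rw [hWeq]
    exact ((hT1.sub hT2).sub hT3).add hT4
  have hT12 : Integrable (fun p : ℝ × ℝ => (G p.1 * ricePdf σ μ₂ p.1) * ricePdf σ μ₁ p.2
      - ricePdf σ μ₂ p.1 * (G p.2 * ricePdf σ μ₁ p.2)) (ν.prod ν) := hT1.sub hT2
  have hT123 : Integrable (fun p : ℝ × ℝ => (G p.1 * ricePdf σ μ₂ p.1) * ricePdf σ μ₁ p.2
      - ricePdf σ μ₂ p.1 * (G p.2 * ricePdf σ μ₁ p.2)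
      - (G p.1 * ricePdf σ μ₁ p.1) * ricePdf σ μ₂ p.2) (ν.prod ν) := hT12.sub hT3
  have hWval : ∫ p, W p ∂(ν.prod ν)
      = 2 * ((∫ r, G r * ricePdf σ μ₂ r ∂ν) - (∫ r, G r * ricePdf σ μ₁ r ∂ν)) := by
    rw [hWeq]
    rw [integral_add hT123 hT4, integral_sub hT12 hT3, integral_sub hT1 hT2]
    rw [integral_prod_mul (fun r => G r * ricePdf σ μ₂ r) (ricePdf σ μ₁),
      integral_prod_mul (ricePdf σ μ₂) (fun r => G r * ricePdf σ μ₁ r),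
      integral_prod_mul (fun r => G r * ricePdf σ μ₁ r) (ricePdf σ μ₂),
      integral_prod_mul (ricePdf σ μ₁) (fun r => G r * ricePdf σ μ₂ r)]
    have e1 : ∫ r, ricePdf σ μ₁ r ∂ν = 1 := ricePdf_integral_one hσ μ₁
    have e2 : ∫ r, ricePdf σ μ₂ r ∂ν = 1 := ricePdf_integral_one hσ μ₂
    rw [e1, e2]
    ring
  -- sign analysis
  have hprodrestrict : ν.prod ν = (volume.prod volume).restrict (Set.Ioi 0 ×ˢ Set.Ioi 0) :=
    Measure.prod_restrict _ _
  have hWsign : ∀ p : ℝ × ℝ, p.1 ∈ Set.Ioi (0:ℝ) → p.2 ∈ Set.Ioi (0:ℝ) → 0 ≤ W p := by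
    rintro ⟨r, s⟩ hr hs
    simp only [Set.mem_Ioi] at hr hs
    rcases lt_trichotomy r s with hlt | heq | hgt
    · have hA : ricePdf σ μ₂ r * ricePdf σ μ₁ s - ricePdf σ μ₁ r * ricePdf σ μ₂ s < 0 := by
        have := ricePdf_TP2 hσ hr hlt hμ₁ h
        linarith
      have hB : G r - G s < 0 := by have := hGmono hr hlt; linarith
      exact (mul_pos_of_neg_of_neg hA hB).le
    · subst heq
      have hz : W (r, r) = 0 := by rw [hWdef]; ring
      rw [hz]
    · have hA : 0 < ricePdf σ μ₂ r * ricePdf σ μ₁ s - ricePdf σ μ₁ r * ricePdf σ μ₂ s := by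
        have := ricePdf_TP2 hσ hs hgt hμ₁ h
        linarith
      have hB : 0 < G r - G s := by have := hGmono hs hgt; linarith
      exact (mul_pos hA hB).le
  have hWaeNonneg : 0 ≤ᵐ[ν.prod ν] W := by
    rw [hprodrestrict]
    filter_upwards [ae_restrict_mem (measurableSet_Ioi.prod measurableSet_Ioi)] with p hp
    exact hWsign p hp.1 hp.2
  have hWpos : ∀ p : ℝ × ℝ, 0 < p.1 → p.1 < p.2 → 0 < W p := by
    rintro ⟨r, s⟩ hr hlt
    have hA : ricePdf σ μ₂ r * ricePdf σ μ₁ s - ricePdf σ μ₁ r * ricePdf σ μ₂ s < 0 := by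
      have := ricePdf_TP2 hσ hr hlt hμ₁ h
      linarith
    have hB : G r - G s < 0 := by have := hGmono hr hlt; linarith
    exact mul_pos_of_neg_of_neg hA hB
  have hsupp : 0 < (ν.prod ν) (Function.support W) := by
    have hsub : (Set.Ioc (1:ℝ) 2) ×ˢ (Set.Ioc (3:ℝ) 4) ⊆ Function.support W := by
      rintro ⟨r, s⟩ ⟨hr, hs⟩
      have : 0 < W (r, s) := hWpos (r, s) (by linarith [hr.1]) (by
        have := hr.2; have := hs.1; simp only [] ; linarith)
      exact this.ne'
    apply lt_of_lt_of_le _ (measure_mono hsub)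
    rw [Measure.prod_prod, hν, Measure.restrict_apply measurableSet_Ioc,
      Measure.restrict_apply measurableSet_Ioc]
    rw [Set.inter_eq_self_of_subset_left (fun x hx => by exact lt_trans one_pos hx.1),
      Set.inter_eq_self_of_subset_left (fun x (hx : x ∈ Set.Ioc (3:ℝ) 4) =>
        Set.mem_Ioi.mpr (by linarith [hx.1]))]
    rw [Real.volume_Ioc, Real.volume_Ioc]
    rw [show (2:ℝ) - 1 = 1 by norm_num, show (4:ℝ) - 3 = 1 by norm_num]
    norm_num
  have hWintpos : 0 < ∫ p, W p ∂(ν.prod ν) :=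
    (integral_pos_iff_support_of_nonneg_ae hWaeNonneg hWint).mpr hsupp
  rw [hWval] at hWintpos
  rw [hPc μ₁, hPc μ₂]
  linarith
end

section
/- Let σ > 0, μ ≥ 0, let M ≥ 2 be an integer, and set the effective SNR γ = μ²/(2σ²). Then 1 − ∫_0^∞ f(r; μ, σ) · (1 − exp(−r²/(2σ²)))^{M−1} dr = ∑_{k=1}^{M−1} binom(M−1, k) · ((−1)^{k+1}/(k+1)) · exp(−γ·k/(k+1)). Equivalently, the correct detection probability under the interference-free condition equals ∑_{k=0}^{M−1} binom(M−1, k) · ((−1)^k/(k+1)) · exp(−γ·k/(k+1)). -/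
open MeasureTheory

open Real Set ENNReal
set_option maxHeartbeats 1000000

lemma besselI0_summable (x : ℝ) :
    Summable (fun k : ℕ => (x / 2) ^ (2 * k) / ((Nat.factorial k : ℝ)) ^ 2) := by
  refine Summable.of_nonneg_of_le (fun k => ?_) (fun k => ?_)
    (Real.summable_pow_div_factorial ((x / 2) ^ 2))
  · rw [pow_mul]; positivity
  rw [pow_mul]
  refine div_le_div_of_nonneg_left (by positivity) (by positivity) ?_
  have h1 : (1 : ℝ) ≤ (Nat.factorial k : ℝ) := by exact_mod_cast Nat.one_le_iff_ne_zero.mpr (Nat.factorial_ne_zero k)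
  nlinarith

lemma besselI0_nonneg (x : ℝ) : 0 ≤ besselI0 x :=
  tsum_nonneg (fun k => by rw [pow_mul]; positivity)

lemma measurable_besselI0 : Measurable besselI0 := by
  apply measurable_of_tendsto_metrizable
    (f := fun n (x : ℝ) => ∑ k ∈ Finset.range n, (x / 2) ^ (2 * k) / ((Nat.factorial k : ℝ)) ^ 2)
  · intro n
    exact Finset.measurable_sum _ fun k _ => by measurability
  · rw [tendsto_pi_nhds]
    intro x
    exact (besselI0_summable x).hasSum.tendsto_sum_nat

lemma moment_integrable {a : ℝ} (ha : 0 < a) (m : ℕ) :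
    IntegrableOn (fun r : ℝ => r ^ (2 * m + 1) * Real.exp (-a * r ^ 2)) (Ioi 0) := by
  refine (integrableOn_rpow_mul_exp_neg_mul_sq ha
    (s := ((2 * m + 1 : ℕ) : ℝ)) (lt_of_lt_of_le neg_one_lt_zero (by positivity))).congr_fun (fun r hr => ?_) measurableSet_Ioi
  simp only [Real.rpow_natCast]

lemma moment_eval {a : ℝ} (ha : 0 < a) (m : ℕ) :
    ∫ r in Ioi (0:ℝ), r ^ (2 * m + 1) * Real.exp (-a * r ^ 2)
      = (Nat.factorial m : ℝ) / (2 * a ^ (m + 1)) := by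
  have h1 : ∫ r in Ioi (0:ℝ), r ^ (2 * m + 1) * Real.exp (-a * r ^ 2)
      = ∫ r in Ioi (0:ℝ), r ^ ((2 * m + 1 : ℕ) : ℝ) * Real.exp (-a * r ^ ((2:ℕ):ℝ)) := by
    refine setIntegral_congr_fun measurableSet_Ioi (fun r hr => ?_)
    rw [Real.rpow_natCast, Real.rpow_natCast]
  rw [h1]
  have h2 := integral_rpow_mul_exp_neg_mul_rpow (p := ((2:ℕ):ℝ)) (q := ((2 * m + 1 : ℕ) : ℝ))
    (b := a) (by norm_num) (lt_of_lt_of_le neg_one_lt_zero (by positivity)) ha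
  rw [h2]
  have h3 : (((2 * m + 1 : ℕ) : ℝ) + 1) / ((2:ℕ):ℝ) = (m : ℝ) + 1 := by
    push_cast; ring
  rw [h3, Real.Gamma_nat_eq_factorial]
  have h4 : -(((2 * m + 1 : ℕ) : ℝ) + 1) / ((2:ℕ):ℝ) = -(((m + 1 : ℕ) : ℝ)) := by
    push_cast; ring
  rw [h4, Real.rpow_neg ha.le, Real.rpow_natCast]
  ring

lemma besselI0_key {a : ℝ} (x : ℝ) (ha : 0 < a) :
    IntegrableOn (fun r : ℝ => r * Real.exp (-a * r ^ 2) * besselI0 (x * r)) (Ioi 0) ∧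
    ∫ r in Ioi (0:ℝ), r * Real.exp (-a * r ^ 2) * besselI0 (x * r)
      = (2 * a)⁻¹ * Real.exp (x ^ 2 / (4 * a)) := by
  set F : ℕ → ℝ → ℝ := fun m r =>
    (x / 2) ^ (2 * m) / ((Nat.factorial m : ℝ)) ^ 2 * (r ^ (2 * m + 1) * Real.exp (-a * r ^ 2))
    with hF
  set I : ℕ → ℝ := fun m => (2 * a)⁻¹ * ((x ^ 2 / (4 * a)) ^ m / (Nat.factorial m : ℝ)) with hIdef
  have hterm : ∀ (r : ℝ) (m : ℕ),
      r * Real.exp (-a * r ^ 2) * ((x * r / 2) ^ (2 * m) / ((Nat.factorial m : ℝ)) ^ 2)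
        = F m r := by
    intro r m
    have h : (x * r / 2) ^ (2 * m) = (x / 2) ^ (2 * m) * r ^ (2 * m) := by
      rw [show x * r / 2 = x / 2 * r by ring, mul_pow]
    rw [h, hF]
    ring
  have hpt : ∀ r : ℝ, r * Real.exp (-a * r ^ 2) * besselI0 (x * r) = ∑' m, F m r := by
    intro r
    rw [besselI0, ← tsum_mul_left]
    exact tsum_congr (fun m => hterm r m)
  have hsum_r : ∀ r : ℝ, Summable (fun m => F m r) := by
    intro r
    exact ((besselI0_summable (x * r)).mul_left
      (r * Real.exp (-a * r ^ 2))).congr (fun m => hterm r m)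
  have hFnn_pt : ∀ r ∈ Ioi (0:ℝ), ∀ m, 0 ≤ F m r := by
    intro r hr m
    have h1 : (0:ℝ) ≤ (x / 2) ^ (2 * m) := by rw [pow_mul]; positivity
    have h2 : (0:ℝ) < r := hr
    rw [hF]
    positivity
  have hFint : ∀ m, IntegrableOn (F m) (Ioi 0) := fun m =>
    (moment_integrable ha m).const_mul _
  have hFnn : ∀ m, 0 ≤ᵐ[volume.restrict (Ioi 0)] F m := by
    intro m
    filter_upwards [ae_restrict_mem measurableSet_Ioi] with r hr
    exact hFnn_pt r hr m
  have hfact : ∀ m : ℕ, (Nat.factorial m : ℝ) ≠ 0 :=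
    fun m => Nat.cast_ne_zero.mpr (Nat.factorial_ne_zero m)
  have hI : ∀ m, ∫ r in Ioi (0:ℝ), F m r = I m := by
    intro m
    simp only [hF, hIdef]
    rw [MeasureTheory.integral_const_mul, moment_eval ha m]
    have h : (x / 2) ^ (2 * m) = (x ^ 2) ^ m / 4 ^ m := by
      rw [pow_mul, div_pow, div_pow]; norm_num
    rw [h]
    have h2 : (x ^ 2 / (4 * a)) ^ m = (x ^ 2) ^ m / (4 ^ m * a ^ m) := by
      rw [div_pow, mul_pow]
    rw [h2]
    field_simp
    ring
  have hIsum : Summable I := (Real.summable_pow_div_factorial _).mul_left _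
  have hInn : ∀ m, 0 ≤ I m := by
    intro m
    simp only [hIdef]
    have : (0:ℝ) ≤ (x ^ 2 / (4 * a)) ^ m := by positivity
    positivity
  have hItsum : ∑' m, I m = (2 * a)⁻¹ * Real.exp (x ^ 2 / (4 * a)) := by
    simp only [hIdef]
    rw [tsum_mul_left]
    congr 1
    rw [Real.exp_eq_exp_ℝ, NormedSpace.exp_eq_tsum_div]
  have hlin : ∀ m, ∫⁻ r in Ioi (0:ℝ), ‖F m r‖₊ = ENNReal.ofReal (I m) := by
    intro m
    have heq : ∀ᵐ r ∂(volume.restrict (Ioi (0:ℝ))),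
        (‖F m r‖₊ : ℝ≥0∞) = ENNReal.ofReal (F m r) := by
      filter_upwards [hFnn m] with r hr
      rw [← enorm_eq_nnnorm, Real.enorm_eq_ofReal hr]
    rw [lintegral_congr_ae heq, ← ofReal_integral_eq_lintegral_ofReal (hFint m) (hFnn m), hI m]
  have hne : ∑' m, ∫⁻ r in Ioi (0:ℝ), ‖F m r‖₊ ≠ ⊤ := by
    rw [tsum_congr hlin, ← ENNReal.ofReal_tsum_of_nonneg hInn hIsum]
    exact ENNReal.ofReal_ne_top
  have hFmeas : ∀ m, AEStronglyMeasurable (F m) (volume.restrict (Ioi (0:ℝ))) := fun m =>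
    (hFint m).aestronglyMeasurable
  have hint_tsum := MeasureTheory.integral_tsum hFmeas hne
  constructor
  · -- integrability
    have hgmeas : Measurable (fun r : ℝ => r * Real.exp (-a * r ^ 2) * besselI0 (x * r)) := by
      have h1 : Measurable fun r : ℝ => r * Real.exp (-a * r ^ 2) :=
        measurable_id.mul (Real.measurable_exp.comp ((measurable_id.pow_const 2).const_mul (-a)))
      exact h1.mul (measurable_besselI0.comp (measurable_id.const_mul x))
    refine ⟨hgmeas.aestronglyMeasurable, ?_⟩
    simp only [HasFiniteIntegral]
    have key1 : ∫⁻ r in Ioi (0:ℝ), ‖r * Real.exp (-a * r ^ 2) * besselI0 (x * r)‖ₑ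
        = ∑' m, ∫⁻ r in Ioi (0:ℝ), ENNReal.ofReal (F m r) := by
      rw [← lintegral_tsum (fun m => ((hFint m).aemeasurable).ennreal_ofReal)]
      refine lintegral_congr_ae ?_
      filter_upwards [ae_restrict_mem measurableSet_Ioi] with r hr
      have hg0 : 0 ≤ r * Real.exp (-a * r ^ 2) * besselI0 (x * r) := by
        have := besselI0_nonneg (x * r)
        have h2 : (0:ℝ) < r := hr
        positivity
      rw [Real.enorm_eq_ofReal hg0, hpt r,
        ENNReal.ofReal_tsum_of_nonneg (hFnn_pt r hr) (hsum_r r)]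
    rw [key1]
    have key2 : ∀ m, ∫⁻ r in Ioi (0:ℝ), ENNReal.ofReal (F m r) = ENNReal.ofReal (I m) := by
      intro m
      rw [← ofReal_integral_eq_lintegral_ofReal (hFint m) (hFnn m), hI m]
    rw [tsum_congr key2, ← ENNReal.ofReal_tsum_of_nonneg hInn hIsum]
    exact ENNReal.ofReal_lt_top
  · calc ∫ r in Ioi (0:ℝ), r * Real.exp (-a * r ^ 2) * besselI0 (x * r)
        = ∫ r in Ioi (0:ℝ), ∑' m, F m r := by
          refine integral_congr_ae (Filter.Eventually.of_forall fun r => hpt r)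
      _ = ∑' m, ∫ r in Ioi (0:ℝ), F m r := hint_tsum
      _ = ∑' m, I m := tsum_congr hI
      _ = (2 * a)⁻¹ * Real.exp (x ^ 2 / (4 * a)) := hItsum

/-- Accurate closed-form SER under the interference-free condition. -/
theorem closed_form_SER (σ μ : ℝ) (hσ : 0 < σ) (hμ : 0 ≤ μ) (M : ℕ) (hM : 2 ≤ M)
    (γ : ℝ) (hγ : γ = μ ^ 2 / (2 * σ ^ 2)) :
    (1 - ∫ r in Set.Ioi (0 : ℝ),
        ricePdf σ μ r * (1 - Real.exp (-r ^ 2 / (2 * σ ^ 2))) ^ (M - 1)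
      = ∑ k ∈ Finset.Icc 1 (M - 1),
          (Nat.choose (M - 1) k : ℝ) * ((-1 : ℝ) ^ (k + 1) / ((k : ℝ) + 1))
            * Real.exp (-γ * k / ((k : ℝ) + 1)))
    ∧ (∫ r in Set.Ioi (0 : ℝ),
        ricePdf σ μ r * (1 - Real.exp (-r ^ 2 / (2 * σ ^ 2))) ^ (M - 1)
      = ∑ k ∈ Finset.range M,
          (Nat.choose (M - 1) k : ℝ) * ((-1 : ℝ) ^ k / ((k : ℝ) + 1))
            * Real.exp (-γ * k / ((k : ℝ) + 1))) := by
  have hσ2 : (0:ℝ) < σ ^ 2 := by positivity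
  have hσ2' : (σ:ℝ) ^ 2 ≠ 0 := hσ2.ne'
  -- pointwise identity
  have hpt : ∀ (k : ℕ) (r : ℝ),
      ricePdf σ μ r * Real.exp (-r ^ 2 / (2 * σ ^ 2)) ^ k
        = ((σ ^ 2)⁻¹ * Real.exp (-γ)) *
          (r * Real.exp (-(((k:ℝ) + 1) / (2 * σ ^ 2)) * r ^ 2) * besselI0 (μ / σ ^ 2 * r)) := by
    intro k r
    have h1 : Real.exp (-r ^ 2 / (2 * σ ^ 2)) ^ k
        = Real.exp ((k:ℝ) * (-r ^ 2 / (2 * σ ^ 2))) := (Real.exp_nat_mul _ k).symm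
    have h2 : Real.exp (-(r ^ 2 + μ ^ 2) / (2 * σ ^ 2)) * Real.exp ((k:ℝ) * (-r ^ 2 / (2 * σ ^ 2)))
        = Real.exp (-γ) * Real.exp (-(((k:ℝ) + 1) / (2 * σ ^ 2)) * r ^ 2) := by
      rw [← Real.exp_add, ← Real.exp_add]
      congr 1
      rw [hγ]; field_simp; ring
    have h3 : besselI0 (r * μ / σ ^ 2) = besselI0 (μ / σ ^ 2 * r) := by
      rw [show r * μ / σ ^ 2 = μ / σ ^ 2 * r by ring]
    rw [ricePdf, h1, h3]
    calc r / σ ^ 2 * Real.exp (-(r ^ 2 + μ ^ 2) / (2 * σ ^ 2)) * besselI0 (μ / σ ^ 2 * r) *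
          Real.exp ((k:ℝ) * (-r ^ 2 / (2 * σ ^ 2)))
        = r / σ ^ 2 * (Real.exp (-(r ^ 2 + μ ^ 2) / (2 * σ ^ 2)) *
            Real.exp ((k:ℝ) * (-r ^ 2 / (2 * σ ^ 2)))) * besselI0 (μ / σ ^ 2 * r) := by ring
      _ = _ := by rw [h2]; ring
  have hak : ∀ k : ℕ, (0:ℝ) < ((k:ℝ) + 1) / (2 * σ ^ 2) := by
    intro k; positivity
  have hterm_int : ∀ k : ℕ, IntegrableOn
      (fun r => ricePdf σ μ r * Real.exp (-r ^ 2 / (2 * σ ^ 2)) ^ k) (Ioi 0) := by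
    intro k
    exact (((besselI0_key (μ / σ ^ 2) (hak k)).1.const_mul
      ((σ ^ 2)⁻¹ * Real.exp (-γ)))).congr (ae_of_all _ fun r => (hpt k r).symm)
  have hval : ∀ k : ℕ,
      ∫ r in Ioi (0:ℝ), ricePdf σ μ r * Real.exp (-r ^ 2 / (2 * σ ^ 2)) ^ k
        = (1 / ((k:ℝ) + 1)) * Real.exp (-γ * k / ((k:ℝ) + 1)) := by
    intro k
    have hk1 : (0:ℝ) < (k:ℝ) + 1 := by positivity
    obtain ⟨hint, hres⟩ := besselI0_key (μ / σ ^ 2) (hak k)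
    have hcongr : ∫ r in Ioi (0:ℝ), ricePdf σ μ r * Real.exp (-r ^ 2 / (2 * σ ^ 2)) ^ k
        = ∫ r in Ioi (0:ℝ), ((σ ^ 2)⁻¹ * Real.exp (-γ)) *
          (r * Real.exp (-(((k:ℝ) + 1) / (2 * σ ^ 2)) * r ^ 2) * besselI0 (μ / σ ^ 2 * r)) :=
      integral_congr_ae (Filter.Eventually.of_forall fun r => hpt k r)
    rw [hcongr, MeasureTheory.integral_const_mul, hres]
    have e1 : (2 * (((k:ℝ) + 1) / (2 * σ ^ 2)))⁻¹ = σ ^ 2 / ((k:ℝ) + 1) := by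
      field_simp
    have e2 : (μ / σ ^ 2) ^ 2 / (4 * (((k:ℝ) + 1) / (2 * σ ^ 2))) = γ / ((k:ℝ) + 1) := by
      rw [hγ]; field_simp; ring
    rw [e1, e2, show -γ * k / ((k:ℝ) + 1) = -γ + γ / ((k:ℝ) + 1) by field_simp; ring,
      Real.exp_add]
    field_simp
  -- binomial expansion
  have hn : M - 1 + 1 = M := by omega
  have hbin : ∀ t : ℝ, (1 - t) ^ (M - 1)
      = ∑ k ∈ Finset.range M, ((M - 1).choose k : ℝ) * (-1) ^ k * t ^ k := by
    intro t
    rw [sub_eq_add_neg, add_comm, add_pow, hn]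
    refine Finset.sum_congr rfl fun k _ => ?_
    rw [one_pow, neg_pow]
    ring
  have hmain : ∫ r in Ioi (0:ℝ), ricePdf σ μ r * (1 - Real.exp (-r ^ 2 / (2 * σ ^ 2))) ^ (M - 1)
      = ∑ k ∈ Finset.range M, ((M - 1).choose k : ℝ) * (-1) ^ k *
          ((1 / ((k:ℝ) + 1)) * Real.exp (-γ * k / ((k:ℝ) + 1))) := by
    calc ∫ r in Ioi (0:ℝ), ricePdf σ μ r * (1 - Real.exp (-r ^ 2 / (2 * σ ^ 2))) ^ (M - 1)
        = ∫ r in Ioi (0:ℝ), ∑ k ∈ Finset.range M, ((M - 1).choose k : ℝ) * (-1) ^ k *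
            (ricePdf σ μ r * Real.exp (-r ^ 2 / (2 * σ ^ 2)) ^ k) := by
          refine integral_congr_ae (Filter.Eventually.of_forall fun r => ?_)
          beta_reduce
          rw [hbin, Finset.mul_sum]
          exact Finset.sum_congr rfl fun k _ => by ring
      _ = ∑ k ∈ Finset.range M, ∫ r in Ioi (0:ℝ), ((M - 1).choose k : ℝ) * (-1) ^ k *
            (ricePdf σ μ r * Real.exp (-r ^ 2 / (2 * σ ^ 2)) ^ k) := by
          refine integral_finset_sum _ fun k _ => ?_
          exact (hterm_int k).const_mul _
      _ = ∑ k ∈ Finset.range M, ((M - 1).choose k : ℝ) * (-1) ^ k *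
            ((1 / ((k:ℝ) + 1)) * Real.exp (-γ * k / ((k:ℝ) + 1))) := by
          refine Finset.sum_congr rfl fun k _ => ?_
          rw [MeasureTheory.integral_const_mul, hval k]
  have hpart2 : ∫ r in Ioi (0:ℝ), ricePdf σ μ r * (1 - Real.exp (-r ^ 2 / (2 * σ ^ 2))) ^ (M - 1)
      = ∑ k ∈ Finset.range M, (Nat.choose (M - 1) k : ℝ) * ((-1 : ℝ) ^ k / ((k : ℝ) + 1))
          * Real.exp (-γ * k / ((k : ℝ) + 1)) := by
    rw [hmain]
    exact Finset.sum_congr rfl fun k _ => by ring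
  refine ⟨?_, hpart2⟩
  rw [hpart2]
  have hsplit : Finset.range M = insert 0 (Finset.Icc 1 (M - 1)) := by
    ext k
    simp only [Finset.mem_range, Finset.mem_insert, Finset.mem_Icc]
    omega
  rw [hsplit, Finset.sum_insert (by simp)]
  simp only [Nat.choose_zero_right, Nat.cast_one, Nat.cast_zero, pow_zero, mul_zero, zero_div,
    Real.exp_zero, neg_zero]
  have hneg : ∑ k ∈ Finset.Icc 1 (M - 1),
      (Nat.choose (M - 1) k : ℝ) * ((-1 : ℝ) ^ (k + 1) / ((k : ℝ) + 1))
        * Real.exp (-γ * k / ((k : ℝ) + 1))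
      = -∑ k ∈ Finset.Icc 1 (M - 1),
      (Nat.choose (M - 1) k : ℝ) * ((-1 : ℝ) ^ k / ((k : ℝ) + 1))
        * Real.exp (-γ * k / ((k : ℝ) + 1)) := by
    rw [← Finset.sum_neg_distrib]
    refine Finset.sum_congr rfl fun k _ => ?_
    rw [pow_succ]
    ring
  rw [hneg]
  norm_num
end

section
/- Let M ≥ 2 be an integer and define SER(γ, M) = ∑_{k=1}^{M−1} binom(M−1, k) · ((−1)^{k+1}/(k+1)) · exp(−γ·k/(k+1)) for γ ≥ 0. Then SER(γ, M) is asymptotically equivalent to ((M−1)/2)·exp(−γ/2) as γ → ∞; that is, lim_{γ → ∞} SER(γ, M) / ( ((M−1)/2)·exp(−γ/2) ) = 1. -/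
/-- Symbol error rate of the PDNN-SSK system under the interference-free condition. -/
noncomputable def SER (γ : ℝ) (M : ℕ) : ℝ :=
  ∑ k ∈ Finset.Icc 1 (M - 1),
    (Nat.choose (M - 1) k : ℝ) * ((-1 : ℝ) ^ (k + 1) / ((k : ℝ) + 1))
      * Real.exp (-γ * k / ((k : ℝ) + 1))

/-- Asymptotic equivalence of the SER with `((M-1)/2)·exp(-γ/2)` as `γ → ∞`. -/
theorem SER_asymptotic (M : ℕ) (hM : 2 ≤ M) :
    Filter.Tendsto (fun γ : ℝ => SER γ M / (((M : ℝ) - 1) / 2 * Real.exp (-γ / 2)))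
      Filter.atTop (nhds 1) := by
  have hM1 : (1 : ℝ) ≤ (M : ℝ) - 1 := by
    have : (2 : ℝ) ≤ (M : ℝ) := by exact_mod_cast hM
    linarith
  have hB : ((M : ℝ) - 1) / 2 ≠ 0 := by positivity
  have hmem : (1 : ℕ) ∈ Finset.Icc 1 (M - 1) := by
    simp [Finset.mem_Icc]; omega
  have hsum : (∑ k ∈ Finset.Icc 1 (M - 1), (if k = 1 then (1 : ℝ) else 0)) = 1 := by
    rw [Finset.sum_ite_eq' (Finset.Icc 1 (M - 1)) 1 (fun _ => (1:ℝ))]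
    simp [hmem]
  have key : ∀ k ∈ Finset.Icc 1 (M - 1),
      Filter.Tendsto (fun γ : ℝ =>
        ((Nat.choose (M - 1) k : ℝ) * ((-1 : ℝ) ^ (k + 1) / ((k : ℝ) + 1))
          * Real.exp (-γ * k / ((k : ℝ) + 1))) / (((M : ℝ) - 1) / 2 * Real.exp (-γ / 2)))
        Filter.atTop (nhds (if k = 1 then 1 else 0)) := by
    intro k hk
    simp only [Finset.mem_Icc] at hk
    set A : ℝ := (Nat.choose (M - 1) k : ℝ) * ((-1 : ℝ) ^ (k + 1) / ((k : ℝ) + 1)) with hA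
    have hkpos : (0 : ℝ) < (k : ℝ) + 1 := by positivity
    have heq : ∀ γ : ℝ,
        A * Real.exp (-γ * k / ((k : ℝ) + 1)) / (((M : ℝ) - 1) / 2 * Real.exp (-γ / 2))
          = (A / (((M : ℝ) - 1) / 2)) * Real.exp (γ * (1 / 2 - (k : ℝ) / ((k : ℝ) + 1))) := by
      intro γ
      rw [mul_div_mul_comm, show γ * (1 / 2 - (k : ℝ) / ((k : ℝ) + 1))
          = (-γ * k / ((k : ℝ) + 1)) - (-γ / 2) by field_simp; ring, Real.exp_sub]
    simp only [heq]
    rcases eq_or_ne k 1 with rfl | hk1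
    · have : A / (((M : ℝ) - 1) / 2) = 1 := by
        rw [hA]
        have hM1' : M - 1 ≠ 0 := by omega
        rw [Nat.choose_one_right]
        have : ((M - 1 : ℕ) : ℝ) = (M : ℝ) - 1 := by
          have : (1 : ℕ) ≤ M := by omega
          push_cast [Nat.cast_sub this]; ring
        rw [this]
        field_simp
        ring
      simp only [this, if_pos rfl]
      have : ∀ γ : ℝ, (1 : ℝ) * Real.exp (γ * (1 / 2 - (1 : ℝ) / ((1 : ℝ) + 1))) = 1 := by
        intro γ; norm_num
      simp only [Nat.cast_one, this]
      exact tendsto_const_nhds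
    · have hk2 : 2 ≤ k := by omega
      have hr : (1 / 2 - (k : ℝ) / ((k : ℝ) + 1)) < 0 := by
        have hk2' : (2 : ℝ) ≤ (k : ℝ) := by exact_mod_cast hk2
        rw [sub_neg, div_lt_div_iff₀ (by norm_num) hkpos]
        linarith
      have h1 : Filter.Tendsto (fun γ : ℝ => γ * (1 / 2 - (k : ℝ) / ((k : ℝ) + 1)))
          Filter.atTop Filter.atBot :=
        Filter.Tendsto.atTop_mul_const_of_neg hr Filter.tendsto_id
      have h2 : Filter.Tendsto (fun γ : ℝ =>
          Real.exp (γ * (1 / 2 - (k : ℝ) / ((k : ℝ) + 1)))) Filter.atTop (nhds 0) :=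
        Real.tendsto_exp_atBot.comp h1
      have := h2.const_mul (A / (((M : ℝ) - 1) / 2))
      simpa [hk1] using this
  have := Filter.Tendsto.congr (fun γ => (Finset.sum_div _ _ _).symm)
    (tendsto_finset_sum _ key)
  rw [hsum] at this
  exact this
end

section
/- Let M ≥ 2 be an integer. Then for every γ ≥ 0, |SER(γ, M) − ((M−1)/2)·exp(−γ/2)| ≤ 2^{M−1} · exp(−2γ/3), where SER(γ, M) = ∑_{k=1}^{M−1} binom(M−1, k) · ((−1)^{k+1}/(k+1)) · exp(−γ·k/(k+1)). In particular, the error of the asymptotic approximation ((M−1)/2)·exp(−γ/2) decays strictly faster (at rate exp(−2γ/3)) than the approximation itself. -/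
/-- The error of the asymptotic approximation decays at rate `exp(-2γ/3)`. -/
theorem SER_asymptotic_error_bound (M : ℕ) (hM : 2 ≤ M) :
    ∀ γ : ℝ, 0 ≤ γ →
      |SER γ M - ((M : ℝ) - 1) / 2 * Real.exp (-γ / 2)|
        ≤ 2 ^ (M - 1) * Real.exp (-2 * γ / 3) := by
  intro γ hγ
  have hsplit : Finset.Icc 1 (M - 1) = insert 1 (Finset.Icc 2 (M - 1)) := by
    ext k
    simp only [Finset.mem_insert, Finset.mem_Icc]
    omega
  have hterm1 : (Nat.choose (M - 1) 1 : ℝ) * ((-1 : ℝ) ^ (1 + 1) / ((1 : ℕ) + 1))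
      * Real.exp (-γ * (1 : ℕ) / ((1 : ℕ) + 1)) = ((M : ℝ) - 1) / 2 * Real.exp (-γ / 2) := by
    have h1 : ((M - 1 : ℕ) : ℝ) = (M : ℝ) - 1 := by
      have : (1 : ℕ) ≤ M := by omega
      push_cast [this]; ring
    rw [Nat.choose_one_right, h1]
    norm_num
    ring_nf
  have hrw : SER γ M - ((M : ℝ) - 1) / 2 * Real.exp (-γ / 2) =
      ∑ k ∈ Finset.Icc 2 (M - 1),
        (Nat.choose (M - 1) k : ℝ) * ((-1 : ℝ) ^ (k + 1) / ((k : ℝ) + 1))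
          * Real.exp (-γ * k / ((k : ℝ) + 1)) := by
    rw [SER, hsplit, Finset.sum_insert (by simp)]
    rw [hterm1]; ring
  rw [hrw]
  calc |∑ k ∈ Finset.Icc 2 (M - 1),
        (Nat.choose (M - 1) k : ℝ) * ((-1 : ℝ) ^ (k + 1) / ((k : ℝ) + 1))
          * Real.exp (-γ * k / ((k : ℝ) + 1))|
      ≤ ∑ k ∈ Finset.Icc 2 (M - 1),
        |(Nat.choose (M - 1) k : ℝ) * ((-1 : ℝ) ^ (k + 1) / ((k : ℝ) + 1))
          * Real.exp (-γ * k / ((k : ℝ) + 1))| := Finset.abs_sum_le_sum_abs _ _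
    _ ≤ ∑ k ∈ Finset.Icc 2 (M - 1),
        (Nat.choose (M - 1) k : ℝ) * Real.exp (-2 * γ / 3) := by
        apply Finset.sum_le_sum
        intro k hk
        rw [Finset.mem_Icc] at hk
        have hk2 : (2 : ℝ) ≤ (k : ℝ) := by exact_mod_cast hk.1
        rw [abs_mul, abs_mul]
        have h1 : |(Nat.choose (M - 1) k : ℝ)| = (Nat.choose (M - 1) k : ℝ) := by
          rw [abs_of_nonneg]; positivity
        have h2 : |(-1 : ℝ) ^ (k + 1) / ((k : ℝ) + 1)| ≤ 1 := by
          rw [abs_div, abs_pow, abs_neg, abs_one, one_pow]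
          rw [div_le_one (by positivity)]
          rw [abs_of_nonneg (by positivity)]
          linarith
        have h3 : |Real.exp (-γ * k / ((k : ℝ) + 1))| ≤ Real.exp (-2 * γ / 3) := by
          rw [abs_of_nonneg (Real.exp_pos _).le]
          apply Real.exp_le_exp.mpr
          rw [div_le_div_iff₀ (by positivity) (by norm_num)]
          nlinarith
        calc |(Nat.choose (M - 1) k : ℝ)| * |(-1 : ℝ) ^ (k + 1) / ((k : ℝ) + 1)|
              * |Real.exp (-γ * k / ((k : ℝ) + 1))|
            ≤ (Nat.choose (M - 1) k : ℝ) * 1 * Real.exp (-2 * γ / 3) := by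
              apply mul_le_mul
              · apply mul_le_mul (le_of_eq h1) h2 (abs_nonneg _) (by positivity)
              · exact h3
              · exact abs_nonneg _
              · positivity
          _ = (Nat.choose (M - 1) k : ℝ) * Real.exp (-2 * γ / 3) := by ring
    _ = (∑ k ∈ Finset.Icc 2 (M - 1), (Nat.choose (M - 1) k : ℝ)) * Real.exp (-2 * γ / 3) := by
        rw [Finset.sum_mul]
    _ ≤ (2 : ℝ) ^ (M - 1) * Real.exp (-2 * γ / 3) := by
        apply mul_le_mul_of_nonneg_right _ (Real.exp_pos _).le
        have h : ∑ k ∈ Finset.Icc 2 (M - 1), (Nat.choose (M - 1) k : ℝ)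
            ≤ ∑ k ∈ Finset.range (M - 1 + 1), (Nat.choose (M - 1) k : ℝ) := by
          apply Finset.sum_le_sum_of_subset_of_nonneg
          · intro k hk
            rw [Finset.mem_Icc] at hk
            rw [Finset.mem_range]; omega
          · intros; positivity
        have h2 : ∑ k ∈ Finset.range (M - 1 + 1), (Nat.choose (M - 1) k : ℝ)
            = 2 ^ (M - 1) := by
          rw [← Nat.cast_sum]
          rw [Nat.sum_range_choose]
          push_cast; ring
        linarith
end

section
/- Let M ≥ 2 be an integer. Then for every γ ≥ 0, SER(γ, M) = ∑_{k=1}^{M−1} binom(M−1, k) · ((−1)^{k+1}/(k+1)) · exp(−γ·k/(k+1)) ≤ ((M−1)/2)·exp(−γ/2); that is, the asymptotic expression ((M−1)/2)·exp(−γ/2) is an upper bound on the exact symbol error rate for all SNR values γ ≥ 0. -/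
open MeasureTheory Real Set Filter Finset Nat

set_option maxRecDepth 4000


lemma real_exp_tsum (x : ℝ) : Real.exp x = ∑' j : ℕ, x ^ j / j ! := by
  rw [Real.exp_eq_exp_ℝ, NormedSpace.exp_eq_tsum_div]

lemma integrableOn_pow_mul_exp (j : ℕ) {c : ℝ} (hc : 0 < c) :
    IntegrableOn (fun u : ℝ => u ^ j * Real.exp (-(c * u))) (Ioi 0) := by
  apply integrable_of_isBigO_exp_neg (half_pos hc)
  · exact ((continuous_pow j).mul
      (Real.continuous_exp.comp (continuous_const.mul continuous_id).neg)).continuousOn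
  · have h0 : Tendsto (fun u : ℝ => u ^ j * Real.exp (-(c/2) * u)) atTop (nhds 0) := by
      refine (tendsto_rpow_mul_exp_neg_mul_atTop_nhds_zero (j : ℝ) (c/2) (half_pos hc)).congr' ?_
      filter_upwards [eventually_gt_atTop (0:ℝ)] with x hx
      rw [Real.rpow_natCast]
    have hb : (fun u : ℝ => u ^ j * Real.exp (-(c/2) * u)) =O[atTop] (fun _ : ℝ => (1:ℝ)) :=
      h0.isBigO_one ℝ
    have h2 := hb.mul (Asymptotics.isBigO_refl (fun u : ℝ => Real.exp (-(c/2) * u)) atTop)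
    simp only [one_mul] at h2
    refine h2.congr' ?_ (EventuallyEq.refl _ _)
    filter_upwards with x
    rw [mul_assoc, ← Real.exp_add]
    ring_nf

lemma integral_pow_mul_exp (j : ℕ) {c : ℝ} (hc : 0 < c) :
    ∫ u in Ioi 0, u ^ j * Real.exp (-(c * u)) = (j ! : ℝ) / c ^ (j + 1) := by
  have h := integral_rpow_mul_exp_neg_mul_Ioi (a := (j:ℝ)+1) (r := c) (by positivity) hc
  have e1 : ∀ x ∈ Ioi (0:ℝ),
      x ^ (((j:ℝ)+1) - 1) * Real.exp (-(c*x)) = x ^ j * Real.exp (-(c*x)) := by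
    intro x hx
    rw [show ((j:ℝ)+1)-1 = ((j:ℕ):ℝ) by push_cast; ring, Real.rpow_natCast]
  rw [setIntegral_congr_fun measurableSet_Ioi e1] at h
  rw [h, Real.Gamma_nat_eq_factorial,
    show ((j:ℝ)+1) = ((j+1:ℕ):ℝ) by push_cast; ring, Real.rpow_natCast]
  rw [one_div, inv_pow, inv_mul_eq_div]

set_option maxRecDepth 4000


lemma key_ineq (n j : ℕ) :
    ∑ k ∈ Finset.Icc 1 n, (n.choose k : ℝ) * ((-1:ℝ)^(k+1) / ((k:ℝ)+1)^(j+1))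
      ≤ (n:ℝ) / 2^(j+1) := by
  set f : ℕ → ℝ → ℝ := fun k u =>
    ((n.choose k : ℝ) * (-1:ℝ)^k) * (u ^ j * Real.exp (-(((k:ℝ)+1) * u))) with hf
  have hpos : ∀ k : ℕ, (0:ℝ) < (k:ℝ)+1 := fun k => by positivity
  have hintf : ∀ k ∈ Finset.range (n+1), IntegrableOn (f k) (Ioi 0) :=
    fun k _ => (integrableOn_pow_mul_exp j (hpos k)).const_mul _
  -- pointwise identity on Ioi 0
  have hpt : ∀ u ∈ Ioi (0:ℝ),
      (u ^ j * Real.exp (-u)) * (1 - Real.exp (-u)) ^ n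
        = ∑ k ∈ Finset.range (n+1), f k u := by
    intro u hu
    have hxp : (1 - Real.exp (-u)) ^ n
        = ∑ k ∈ Finset.range (n+1), (-Real.exp (-u)) ^ k * (n.choose k : ℝ) := by
      have := add_pow (-Real.exp (-u)) 1 n
      simp only [one_pow, mul_one] at this
      rw [show (1:ℝ) - Real.exp (-u) = -Real.exp (-u) + 1 by ring, this]
    rw [hxp, Finset.mul_sum]
    refine Finset.sum_congr rfl fun k _ => ?_
    have hek : Real.exp (-(((k:ℝ)+1) * u)) = Real.exp (-u) ^ k * Real.exp (-u) := by
      rw [← Real.exp_nat_mul, ← Real.exp_add]; ring_nf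
    rw [hf]
    simp only []
    rw [hek, neg_pow]
    ring
  -- the integral of the product
  have hIeq : ∫ u in Ioi 0, (u ^ j * Real.exp (-u)) * (1 - Real.exp (-u)) ^ n
      = ∑ k ∈ Finset.range (n+1),
          ((n.choose k : ℝ) * (-1:ℝ)^k) * ((j ! : ℝ) / ((k:ℝ)+1)^(j+1)) := by
    rw [setIntegral_congr_fun measurableSet_Ioi hpt, integral_finset_sum _ hintf]
    refine Finset.sum_congr rfl fun k _ => ?_
    rw [hf]
    simp only []
    rw [integral_const_mul, integral_pow_mul_exp j (hpos k)]
  -- lower bound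
  have hlow : (j ! : ℝ) / 1^(j+1) - (n:ℝ) * ((j ! : ℝ) / 2^(j+1))
      ≤ ∫ u in Ioi 0, (u ^ j * Real.exp (-u)) * (1 - Real.exp (-u)) ^ n := by
    have hint1 : IntegrableOn
        (fun u : ℝ => u ^ j * Real.exp (-(1 * u)) - (n:ℝ) * (u ^ j * Real.exp (-(2 * u))))
        (Ioi 0) :=
      (integrableOn_pow_mul_exp j one_pos).sub
        ((integrableOn_pow_mul_exp j two_pos).const_mul _)
    have hint2 : IntegrableOn
        (fun u : ℝ => (u ^ j * Real.exp (-u)) * (1 - Real.exp (-u)) ^ n) (Ioi 0) :=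
      IntegrableOn.congr_fun (integrable_finset_sum _ hintf)
        (fun u hu => (hpt u hu).symm) measurableSet_Ioi
    have hmono := setIntegral_mono_on hint1 hint2 measurableSet_Ioi ?_
    · calc (j ! : ℝ) / 1^(j+1) - (n:ℝ) * ((j ! : ℝ) / 2^(j+1))
          = ∫ u in Ioi 0,
              (u ^ j * Real.exp (-(1 * u)) - (n:ℝ) * (u ^ j * Real.exp (-(2 * u)))) := by
            rw [integral_sub (integrableOn_pow_mul_exp j one_pos)
              ((integrableOn_pow_mul_exp j two_pos).const_mul _),
              integral_const_mul, integral_pow_mul_exp j one_pos,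
              integral_pow_mul_exp j two_pos]
        _ ≤ _ := hmono
    · intro u hu
      have hu' : (0:ℝ) < u := hu
      have hb : 1 + (n:ℝ) * (-Real.exp (-u)) ≤ (1 + (-Real.exp (-u))) ^ n := by
        apply one_add_mul_le_pow
        have : Real.exp (-u) ≤ 1 := Real.exp_le_one_iff.mpr (by linarith)
        linarith
      have hnn : (0:ℝ) ≤ u ^ j * Real.exp (-u) := by positivity
      have hmul := mul_le_mul_of_nonneg_left hb hnn
      calc u ^ j * Real.exp (-(1 * u)) - (n:ℝ) * (u ^ j * Real.exp (-(2 * u)))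
          = (u ^ j * Real.exp (-u)) * (1 + (n:ℝ) * (-Real.exp (-u))) := by
            rw [show -(2*u) = -u + -u by ring, Real.exp_add, one_mul]; ring
        _ ≤ (u ^ j * Real.exp (-u)) * (1 + (-Real.exp (-u))) ^ n := hmul
        _ = (u ^ j * Real.exp (-u)) * (1 - Real.exp (-u)) ^ n := by ring_nf
  -- combine
  rw [hIeq] at hlow
  have hsplit : ∑ k ∈ Finset.range (n+1),
      ((n.choose k : ℝ) * (-1:ℝ)^k) * ((j ! : ℝ) / ((k:ℝ)+1)^(j+1))
      = (j ! : ℝ) + (j ! : ℝ) *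
        ∑ k ∈ Finset.Icc 1 n, (n.choose k : ℝ) * ((-1:ℝ)^k / ((k:ℝ)+1)^(j+1)) := by
    have : Finset.range (n+1) = insert 0 (Finset.Icc 1 n) := by
      ext x; simp [Finset.mem_range, Finset.mem_Icc, Finset.mem_insert]; omega
    rw [this, Finset.sum_insert (by simp), Finset.mul_sum]
    simp only [Nat.choose_zero_right, Nat.cast_one, pow_zero, Nat.cast_zero]
    norm_num
    refine Finset.sum_congr rfl fun k _ => ?_
    ring
  rw [hsplit] at hlow
  set S := ∑ k ∈ Finset.Icc 1 n, (n.choose k : ℝ) * ((-1:ℝ)^k / ((k:ℝ)+1)^(j+1)) with hS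
  have hfac : (0:ℝ) < (j ! : ℝ) := by exact_mod_cast Nat.factorial_pos j
  have hS' : -((n:ℝ) / 2^(j+1)) ≤ S := by
    have h2 : (j ! : ℝ) * (-((n:ℝ) / 2^(j+1))) ≤ (j ! : ℝ) * S := by
      have e : (j ! : ℝ) * (-((n:ℝ)/2^(j+1)))
          = (j ! : ℝ)/1^(j+1) - (n:ℝ)*((j ! : ℝ)/2^(j+1)) - (j ! : ℝ) := by ring
      rw [e]
      linarith
    exact le_of_mul_le_mul_left h2 hfac
  have htgt : ∑ k ∈ Finset.Icc 1 n, (n.choose k : ℝ) * ((-1:ℝ)^(k+1) / ((k:ℝ)+1)^(j+1))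
      = -S := by
    rw [hS, ← Finset.sum_neg_distrib]
    refine Finset.sum_congr rfl fun k _ => ?_
    rw [pow_succ]
    ring
  rw [htgt]
  linarith


/-- The asymptotic expression is an upper bound on the exact SER for all `γ ≥ 0`. -/
theorem SER_le_asymptotic (M : ℕ) (hM : 2 ≤ M) :
    ∀ γ : ℝ, 0 ≤ γ → SER γ M ≤ ((M : ℝ) - 1) / 2 * Real.exp (-γ / 2) := by
  intro γ hγ
  set n := M - 1 with hn
  have hpos : ∀ k : ℕ, (0:ℝ) < (k:ℝ)+1 := fun k => by positivity
  -- term function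
  set t : ℕ → ℕ → ℝ := fun k j =>
    γ ^ j / j ! * (1 / ((k:ℝ)+1)^(j+1)) with ht
  have hsumm : ∀ k : ℕ, Summable (t k) := by
    intro k
    have := (Real.summable_pow_div_factorial (γ / ((k:ℝ)+1))).mul_right (1/((k:ℝ)+1))
    refine this.congr fun j => ?_
    rw [ht]
    simp only [div_pow, pow_succ, mul_inv, one_div]
    ring
  -- each SER term
  have hterm : ∀ k : ℕ,
      (Nat.choose n k : ℝ) * ((-1 : ℝ) ^ (k + 1) / ((k : ℝ) + 1))
        * Real.exp (-γ * k / ((k : ℝ) + 1))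
      = Real.exp (-γ) * ∑' j : ℕ, ((n.choose k : ℝ) * (-1:ℝ)^(k+1)) * t k j := by
    intro k
    have h1 : Real.exp (-γ * k / ((k:ℝ)+1)) = Real.exp (-γ) * Real.exp (γ / ((k:ℝ)+1)) := by
      rw [← Real.exp_add]
      congr 1
      field_simp
      ring
    have h2 : Real.exp (γ / ((k:ℝ)+1)) / ((k:ℝ)+1) = ∑' j : ℕ, t k j := by
      rw [real_exp_tsum, ← tsum_div_const]
      refine tsum_congr fun j => ?_
      rw [ht]
      simp only [div_pow, pow_succ, mul_inv, one_div]
      ring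
    rw [tsum_mul_left, ← h2, h1]
    field_simp
  have hSER : SER γ M = Real.exp (-γ) *
      ∑' j : ℕ, ∑ k ∈ Finset.Icc 1 n, ((n.choose k : ℝ) * (-1:ℝ)^(k+1)) * t k j := by
    rw [SER, ← hn]
    rw [Summable.tsum_finsetSum (fun k _ => (hsumm k).mul_left _)]
    rw [Finset.mul_sum]
    exact Finset.sum_congr rfl fun k _ => hterm k
  -- bound the tsum
  have hA : ∀ j : ℕ, ∑ k ∈ Finset.Icc 1 n, ((n.choose k : ℝ) * (-1:ℝ)^(k+1)) * t k j
      ≤ γ ^ j / j ! * ((n:ℝ) / 2^(j+1)) := by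
    intro j
    have h1 : ∑ k ∈ Finset.Icc 1 n, ((n.choose k : ℝ) * (-1:ℝ)^(k+1)) * t k j
        = γ ^ j / j ! *
          ∑ k ∈ Finset.Icc 1 n, (n.choose k : ℝ) * ((-1:ℝ)^(k+1) / ((k:ℝ)+1)^(j+1)) := by
      rw [Finset.mul_sum]
      refine Finset.sum_congr rfl fun k _ => ?_
      rw [ht]
      ring
    rw [h1]
    have hnn : (0:ℝ) ≤ γ ^ j / j ! := by positivity
    exact mul_le_mul_of_nonneg_left (key_ineq n j) hnn
  have hsummA : Summable (fun j => ∑ k ∈ Finset.Icc 1 n,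
      ((n.choose k : ℝ) * (-1:ℝ)^(k+1)) * t k j) :=
    summable_sum (fun k _ => (hsumm k).mul_left _)
  have hsummB : Summable (fun j : ℕ => γ ^ j / j ! * ((n:ℝ) / 2^(j+1))) := by
    have := (Real.summable_pow_div_factorial (γ / 2)).mul_right ((n:ℝ)/2)
    refine this.congr fun j => ?_
    simp only [div_pow, pow_succ, mul_inv, one_div]
    ring
  have hBval : ∑' j : ℕ, γ ^ j / j ! * ((n:ℝ) / 2^(j+1))
      = (n:ℝ) / 2 * Real.exp (γ / 2) := by
    have : ∀ j : ℕ, γ ^ j / j ! * ((n:ℝ) / 2^(j+1))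
        = (γ/2) ^ j / j ! * ((n:ℝ)/2) := by
      intro j
      simp only [div_pow, pow_succ, mul_inv, one_div]
      ring
    rw [tsum_congr this, tsum_mul_right, ← real_exp_tsum]
    ring
  have hle : ∑' j : ℕ, ∑ k ∈ Finset.Icc 1 n, ((n.choose k : ℝ) * (-1:ℝ)^(k+1)) * t k j
      ≤ (n:ℝ) / 2 * Real.exp (γ / 2) := by
    rw [← hBval]
    exact Summable.tsum_le_tsum hA hsummA hsummB
  rw [hSER]
  have hcast : ((n:ℕ):ℝ) = (M:ℝ) - 1 := by
    rw [hn]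
    have : (1:ℕ) ≤ M := le_trans one_le_two hM
    push_cast [Nat.cast_sub this]
    ring
  calc Real.exp (-γ) * ∑' j : ℕ, ∑ k ∈ Finset.Icc 1 n,
        ((n.choose k : ℝ) * (-1:ℝ)^(k+1)) * t k j
      ≤ Real.exp (-γ) * ((n:ℝ) / 2 * Real.exp (γ / 2)) :=
        mul_le_mul_of_nonneg_left hle (Real.exp_pos _).le
    _ = ((M:ℝ) - 1) / 2 * Real.exp (-γ / 2) := by
        rw [hcast, mul_comm, mul_assoc, ← Real.exp_add]
        ring_nf
end

section
/- Let M ≥ 2 be an integer. Then the function γ ↦ SER(γ, M) = ∑_{k=1}^{M−1} binom(M−1, k) · ((−1)^{k+1}/(k+1)) · exp(−γ·k/(k+1)) is strictly decreasing on [0, ∞): for all 0 ≤ γ₁ < γ₂, SER(γ₂, M) < SER(γ₁, M). Moreover 0 < SER(γ, M) < 1 for every γ ≥ 0, and SER(0, M) = (M−1)/M. -/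
open Finset intervalIntegral MeasureTheory

namespace SERAux

noncomputable def P (w : ℕ → ℝ) (n p : ℕ) (c : ℝ) : ℝ :=
  ∑ k ∈ Finset.Icc 1 n, w k * c ^ k / ((k : ℝ) + 1) ^ p

lemma contP (w : ℕ → ℝ) (n p : ℕ) : Continuous (fun c => P w n p c) := by
  unfold P
  exact continuous_finset_sum _ fun k _ => by fun_prop

lemma stepP (w : ℕ → ℝ) (n p : ℕ) (c : ℝ) :
    ∫ t in (0:ℝ)..c, P w n p t = c * P w n (p+1) c := by
  unfold P
  rw [intervalIntegral.integral_finset_sum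
    (fun k _ => ((by fun_prop : Continuous fun t : ℝ => w k * t ^ k / ((k:ℝ)+1)^p)).intervalIntegrable 0 c)]
  rw [Finset.mul_sum]
  refine Finset.sum_congr rfl fun k hk => ?_
  have h1 : (fun t : ℝ => w k * t ^ k / ((k:ℝ)+1)^p) = fun t : ℝ => (w k / ((k:ℝ)+1)^p) * t ^ k := by
    funext t; ring
  rw [h1, intervalIntegral.integral_const_mul, integral_pow]
  have hk0 : ((k:ℝ)+1) ≠ 0 := by positivity
  have hk1 : ((k:ℝ)+1)^p ≠ 0 := by positivity
  rw [pow_succ]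
  field_simp
  ring

lemma P_pos_of_base (w : ℕ → ℝ) (n : ℕ)
    (h0 : ∀ c : ℝ, 0 < c → c < 1 → 0 < P w n 0 c) :
    ∀ p : ℕ, ∀ c : ℝ, 0 < c → c ≤ 1 → 0 < P w n (p+1) c := by
  intro p
  induction p with
  | zero =>
    intro c hc hc1
    have hi : 0 < ∫ t in (0:ℝ)..c, P w n 0 t := by
      refine intervalIntegral_pos_of_pos_on ((contP w n 0).intervalIntegrable 0 c) ?_ hc
      intro x hx
      exact h0 x hx.1 (lt_of_lt_of_le hx.2 hc1)
    rw [stepP] at hi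
    nlinarith [hi]
  | succ p ih =>
    intro c hc hc1
    have hi : 0 < ∫ t in (0:ℝ)..c, P w n (p+1) t := by
      refine intervalIntegral_pos_of_pos_on ((contP w n (p+1)).intervalIntegrable 0 c) ?_ hc
      intro x hx
      exact ih x hx.1 (hx.2.le.trans hc1)
    rw [stepP] at hi
    nlinarith [hi]

noncomputable def wG (n : ℕ) : ℕ → ℝ := fun k => (n.choose k : ℝ) * (-1 : ℝ)^(k+1)
noncomputable def wF (n : ℕ) : ℕ → ℝ := fun k => (n.choose k : ℝ) * (-1 : ℝ)^(k+1) * k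
noncomputable def wS (n : ℕ) : ℕ → ℝ := fun k => (n.choose k : ℝ) * (-1 : ℝ)^(k+1) / ((k:ℝ)+1)
noncomputable def wD (n : ℕ) : ℕ → ℝ :=
  fun k => (n.choose k : ℝ) * (-1 : ℝ)^(k+1) * k / ((k:ℝ)+1)^2

lemma range_succ_eq (n : ℕ) : Finset.range (n+1) = insert 0 (Finset.Icc 1 n) := by
  ext a
  simp [Nat.lt_succ_iff]
  omega

lemma G0_eq (n : ℕ) (c : ℝ) : P (wG n) n 0 c = 1 - (1-c)^n := by
  unfold P
  have h : (1 - c)^n = ∑ k ∈ Finset.range (n+1), (-c)^k * 1^(n-k) * (n.choose k : ℝ) := by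
    rw [← add_pow]; ring_nf
  have h2 : ∀ k ∈ Finset.Icc 1 n, wG n k * c ^ k / ((k : ℝ) + 1) ^ 0
      = -((-c)^k * 1^(n-k) * (n.choose k : ℝ)) := by
    intro k hk
    simp only [wG, pow_zero, one_pow, neg_pow c, pow_succ]
    ring
  rw [Finset.sum_congr rfl h2, Finset.sum_neg_distrib, h, range_succ_eq,
    Finset.sum_insert (by simp)]
  simp

lemma F0_eq (m : ℕ) (c : ℝ) : P (wF (m+1)) (m+1) 0 c = ((m:ℝ)+1) * c * (1-c)^m := by
  unfold P
  have hchoose : ∀ i : ℕ, (((m+1).choose (i+1) : ℝ) * ((i:ℝ)+1)) = ((m:ℝ)+1) * (m.choose i : ℝ) := by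
    intro i
    have := Nat.add_one_mul_choose_eq m i
    exact_mod_cast congrArg (Nat.cast (R := ℝ)) this.symm
  have hext : ∑ k ∈ Finset.Icc 1 (m+1), wF (m+1) k * c ^ k / ((k : ℝ) + 1) ^ 0
      = ∑ k ∈ Finset.range (m+2), wF (m+1) k * c ^ k := by
    rw [range_succ_eq, Finset.sum_insert (by simp)]
    simp [wF]
  rw [hext, Finset.sum_range_succ']
  have h3 : ∀ i ∈ Finset.range (m+1), wF (m+1) (i+1) * c^(i+1)
      = (((m:ℝ)+1) * c) * ((-c)^i * 1^(m-i) * ((m).choose i : ℝ)) := by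
    intro i _
    have hsgn : (-1:ℝ)^(i+1+1) = (-1)^i := by ring
    simp only [wF, one_pow, mul_one, neg_pow c]
    push_cast
    rw [hsgn]
    linear_combination ((-1:ℝ)^i * c^(i+1)) * hchoose i
  rw [Finset.sum_congr rfl h3, ← Finset.mul_sum, ← add_pow]
  have h0 : wF (m+1) 0 = 0 := by simp [wF]
  rw [h0]
  ring

lemma exp_tsum (x : ℝ) : Real.exp x = ∑' m : ℕ, x ^ m / m.factorial := by
  rw [Real.exp_eq_exp_ℝ, NormedSpace.exp_eq_tsum_div]

lemma summable_coeff (w : ℕ → ℝ) (k : ℕ) (γ : ℝ) :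
    Summable (fun m : ℕ => w k * (γ ^ m / m.factorial / ((k:ℝ)+1)^m)) := by
  have h : ∀ m : ℕ, w k * ((γ/((k:ℝ)+1)) ^ m / m.factorial)
      = w k * (γ ^ m / m.factorial / ((k:ℝ)+1)^m) := by
    intro m
    rw [div_pow]
    ring
  exact (funext h : _) ▸ ((Real.summable_pow_div_factorial (γ/((k:ℝ)+1))).mul_left (w k))

lemma sum_exp_eq (w : ℕ → ℝ) (n : ℕ) (γ : ℝ) :
    ∑ k ∈ Finset.Icc 1 n, w k * Real.exp (-γ * k / ((k:ℝ)+1))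
      = Real.exp (-γ) * ∑' m : ℕ, γ ^ m / m.factorial * P w n m 1 := by
  have h1 : ∀ k ∈ Finset.Icc 1 n, w k * Real.exp (-γ * k / ((k:ℝ)+1))
      = Real.exp (-γ) * ∑' m : ℕ, w k * (γ ^ m / m.factorial / ((k:ℝ)+1)^m) := by
    intro k _
    have hk0 : ((k:ℝ)+1) ≠ 0 := by positivity
    have he : -γ * k / ((k:ℝ)+1) = -γ + γ / ((k:ℝ)+1) := by field_simp; ring
    rw [he, Real.exp_add, exp_tsum (γ / ((k:ℝ)+1)), ← mul_assoc,
      mul_comm (w k) (Real.exp (-γ)), mul_assoc]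
    congr 1
    rw [← tsum_mul_left]
    refine tsum_congr fun m => ?_
    rw [div_pow]
    ring
  rw [Finset.sum_congr rfl h1, ← Finset.mul_sum]
  congr 1
  rw [← Summable.tsum_finsetSum (fun k _ => summable_coeff w k γ)]
  refine tsum_congr fun m => ?_
  unfold P
  rw [Finset.mul_sum]
  refine Finset.sum_congr rfl fun k _ => ?_
  rw [one_pow]
  ring

lemma absP_le (w : ℕ → ℝ) (n m : ℕ) :
    |P w n m 1| ≤ ∑ k ∈ Finset.Icc 1 n, |w k| := by
  unfold P
  refine (Finset.abs_sum_le_sum_abs _ _).trans (Finset.sum_le_sum fun k _ => ?_)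
  rw [one_pow, mul_one, abs_div, abs_pow]
  have h1 : (1:ℝ) ≤ |(k:ℝ)+1| := by
    rw [abs_of_nonneg (by positivity)]
    simp
  have h2 : (1:ℝ) ≤ |(k:ℝ)+1| ^ m := one_le_pow₀ h1
  exact div_le_self (abs_nonneg _) h2

lemma summable_main (w : ℕ → ℝ) (n : ℕ) (γ : ℝ) :
    Summable (fun m : ℕ => γ ^ m / m.factorial * P w n m 1) := by
  refine Summable.of_norm_bounded
    (g := fun m => (|γ| ^ m / m.factorial) * (∑ k ∈ Finset.Icc 1 n, |w k|))
    ((Real.summable_pow_div_factorial |γ|).mul_right _) fun m => ?_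
  rw [Real.norm_eq_abs, abs_mul]
  refine mul_le_mul ?_ (absP_le w n m) (abs_nonneg _) (by positivity)
  rw [abs_div, abs_pow]
  simp [Nat.abs_cast]

lemma GF_sub (n p : ℕ) : P (wG n) n p 1 - P (wG n) n (p+1) 1 = P (wF n) n (p+1) 1 := by
  unfold P
  rw [← Finset.sum_sub_distrib]
  refine Finset.sum_congr rfl fun k _ => ?_
  have hk0 : ((k:ℝ)+1) ≠ 0 := by positivity
  have hk1 : ((k:ℝ)+1)^p ≠ 0 := by positivity
  simp only [wF, wG, one_pow, mul_one, pow_succ]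
  field_simp
  ring

lemma G1_eq (n : ℕ) : P (wG n) n 1 1 = (n:ℝ)/((n:ℝ)+1) := by
  have hs := stepP (wG n) n 0 1
  have hfun : (fun t : ℝ => P (wG n) n 0 t) = fun t : ℝ => 1 - (1-t)^n := funext (G0_eq n)
  rw [hfun] at hs
  have hcont : Continuous fun t : ℝ => (1-t)^n := by fun_prop
  rw [intervalIntegral.integral_sub (continuous_const.intervalIntegrable 0 1)
    (hcont.intervalIntegrable 0 1)] at hs
  have h1 : (∫ _ in (0:ℝ)..1, (1:ℝ)) = 1 := by simp
  have h2 : (∫ t in (0:ℝ)..1, (1-t)^n) = 1/((n:ℝ)+1) := by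
    have : (fun t : ℝ => (1-t)^n) = fun t : ℝ => (fun u : ℝ => u^n) (1 - t) := rfl
    rw [this, intervalIntegral.integral_comp_sub_left (fun u : ℝ => u^n) 1]
    norm_num [integral_pow]
  rw [h1, h2, one_mul] at hs
  rw [← hs]
  have hn0 : ((n:ℝ)+1) ≠ 0 := by positivity
  field_simp
  ring

lemma PwS_eq (n m : ℕ) : P (wS n) n m 1 = P (wG n) n (m+1) 1 := by
  unfold P
  refine Finset.sum_congr rfl fun k _ => ?_
  have hk0 : ((k:ℝ)+1) ≠ 0 := by positivity
  have hk1 : ((k:ℝ)+1)^m ≠ 0 := by positivity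
  simp only [wS, wG, one_pow, mul_one, pow_succ]
  field_simp

lemma PwD_eq (n m : ℕ) : P (wD n) n m 1 = P (wF n) n (m+2) 1 := by
  unfold P
  refine Finset.sum_congr rfl fun k _ => ?_
  have hk0 : ((k:ℝ)+1) ≠ 0 := by positivity
  have hk1 : ((k:ℝ)+1)^m ≠ 0 := by positivity
  simp only [wS, wD, wF, one_pow, mul_one]
  rw [show m + 2 = m + 1 + 1 from rfl, pow_succ, pow_succ]
  field_simp
  ring

lemma integral_exp_term (s a b : ℝ) :
    ∫ u in a..b, s * Real.exp (-u * s) = Real.exp (-a*s) - Real.exp (-b*s) := by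
  have hd : ∀ u ∈ Set.uIcc a b,
      HasDerivAt (fun v : ℝ => -Real.exp (-v * s)) (s * Real.exp (-u*s)) u := by
    intro u _
    have h1 : HasDerivAt (fun v : ℝ => -v * s) (-s) u := by
      simpa using ((hasDerivAt_id u).neg.mul_const s)
    have h2 := h1.exp
    refine h2.neg.congr_deriv ?_
    ring
  rw [intervalIntegral.integral_eq_sub_of_hasDerivAt hd
    ((by fun_prop : Continuous fun u : ℝ => s * Real.exp (-u*s)).intervalIntegrable a b)]
  ring

noncomputable def Sn (n : ℕ) (γ : ℝ) : ℝ :=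
  ∑ k ∈ Finset.Icc 1 n, wS n k * Real.exp (-γ * k / ((k:ℝ)+1))

noncomputable def Dn (n : ℕ) (u : ℝ) : ℝ :=
  ∑ k ∈ Finset.Icc 1 n, wD n k * Real.exp (-u * k / ((k:ℝ)+1))

lemma main (n : ℕ) (hn : 1 ≤ n) :
    (∀ γ₁ γ₂ : ℝ, 0 ≤ γ₁ → γ₁ < γ₂ → Sn n γ₂ < Sn n γ₁)
    ∧ (∀ γ : ℝ, 0 ≤ γ → 0 < Sn n γ ∧ Sn n γ < 1)
    ∧ Sn n 0 = (n:ℝ)/((n:ℝ)+1) := by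
  obtain ⟨m₀, rfl⟩ : ∃ m₀, n = m₀ + 1 := ⟨n - 1, by omega⟩
  set n := m₀ + 1 with hndef
  -- positivity of the F family
  have hFpos : ∀ p : ℕ, 0 < P (wF n) n (p+1) 1 := by
    intro p
    refine P_pos_of_base (wF n) n ?_ p 1 one_pos le_rfl
    intro c hc hc1
    rw [F0_eq]
    have : (0:ℝ) < (1-c)^m₀ := pow_pos (by linarith) m₀
    positivity
  -- positivity of the G family
  have hGpos : ∀ p : ℕ, 0 < P (wG n) n (p+1) 1 := by
    intro p
    refine P_pos_of_base (wG n) n ?_ p 1 one_pos le_rfl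
    intro c hc hc1
    rw [G0_eq]
    have h1 : (1-c)^n < 1 := pow_lt_one₀ (by linarith) (by linarith) (Nat.succ_ne_zero m₀)
    linarith
  -- G decreasing
  have hGle : ∀ m : ℕ, P (wG n) n (m+1) 1 ≤ P (wG n) n 1 1 := by
    intro m
    induction m with
    | zero => exact le_rfl
    | succ m ih =>
      have h := GF_sub n (m+1)
      have h2 := hFpos (m+1)
      linarith
  have hS_pos : ∀ m : ℕ, 0 < P (wS n) n m 1 := by
    intro m
    rw [PwS_eq]
    exact hGpos m
  have hS_le : ∀ m : ℕ, P (wS n) n m 1 ≤ P (wS n) n 0 1 := by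
    intro m
    rw [PwS_eq, PwS_eq]
    exact hGle m
  have hS0 : P (wS n) n 0 1 = (n:ℝ)/((n:ℝ)+1) := by rw [PwS_eq, G1_eq]
  have hSn_eq : ∀ γ : ℝ, Sn n γ = Real.exp (-γ) * ∑' m : ℕ, γ ^ m / m.factorial * P (wS n) n m 1 :=
    fun γ => sum_exp_eq (wS n) n γ
  -- bounds
  have hbounds : ∀ γ : ℝ, 0 ≤ γ → 0 < Sn n γ ∧ Sn n γ < 1 := by
    intro γ hγ
    have hsum := summable_main (wS n) n γ
    have hnonneg : ∀ m : ℕ, 0 ≤ γ ^ m / m.factorial * P (wS n) n m 1 := by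
      intro m
      have := hS_pos m
      have h1 : (0:ℝ) ≤ γ ^ m := pow_nonneg hγ m
      positivity
    have hTpos : 0 < ∑' m : ℕ, γ ^ m / m.factorial * P (wS n) n m 1 := by
      refine Summable.tsum_pos hsum hnonneg 0 ?_
      simpa using hS_pos 0
    constructor
    · rw [hSn_eq γ]
      exact mul_pos (Real.exp_pos _) hTpos
    · have hTle : (∑' m : ℕ, γ ^ m / m.factorial * P (wS n) n m 1)
          ≤ (∑' m : ℕ, γ ^ m / m.factorial) * P (wS n) n 0 1 := by
        rw [← tsum_mul_right]
        refine Summable.tsum_le_tsum (fun m => ?_) hsum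
          ((Real.summable_pow_div_factorial γ).mul_right _)
        have h1 : (0:ℝ) ≤ γ ^ m / m.factorial := by
          have : (0:ℝ) ≤ γ ^ m := pow_nonneg hγ m
          positivity
        exact mul_le_mul_of_nonneg_left (hS_le m) h1
      have hexp : (∑' m : ℕ, γ ^ m / m.factorial) = Real.exp γ := (exp_tsum γ).symm
      rw [hexp] at hTle
      have h2 : Sn n γ ≤ Real.exp (-γ) * (Real.exp γ * P (wS n) n 0 1) := by
        rw [hSn_eq γ]
        exact mul_le_mul_of_nonneg_left hTle (Real.exp_pos _).le
      have h3 : Real.exp (-γ) * (Real.exp γ * P (wS n) n 0 1) = P (wS n) n 0 1 := by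
        rw [← mul_assoc, ← Real.exp_add]
        simp
      have h4 : P (wS n) n 0 1 < 1 := by
        rw [hS0]
        rw [div_lt_one (by positivity)]
        linarith
      linarith
  refine ⟨?_, hbounds, ?_⟩
  · -- strict monotonicity
    intro γ₁ γ₂ hγ₁ h12
    have hDpos : ∀ u : ℝ, 0 ≤ u → 0 < Dn n u := by
      intro u hu
      have heq : Dn n u = Real.exp (-u) * ∑' m : ℕ, u ^ m / m.factorial * P (wD n) n m 1 :=
        sum_exp_eq (wD n) n u
      rw [heq]
      refine mul_pos (Real.exp_pos _) ?_
      refine Summable.tsum_pos (summable_main (wD n) n u) (fun m => ?_) 0 ?_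
      · have h1 : (0:ℝ) ≤ u ^ m := pow_nonneg hu m
        have h2 : 0 < P (wD n) n m 1 := by rw [PwD_eq]; exact hFpos (m+1)
        positivity
      · have h2 : 0 < P (wD n) n 0 1 := by rw [PwD_eq]; exact hFpos 1
        simpa using h2
    have hcontD : Continuous (Dn n) := by
      unfold Dn
      exact continuous_finset_sum _ fun k _ => by fun_prop
    have hterm : ∀ k ∈ Finset.Icc 1 n,
        wS n k * Real.exp (-γ₁ * k / ((k:ℝ)+1)) - wS n k * Real.exp (-γ₂ * k / ((k:ℝ)+1))
          = ∫ u in γ₁..γ₂, wD n k * Real.exp (-u * k / ((k:ℝ)+1)) := by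
      intro k _
      have hk0 : ((k:ℝ)+1) ≠ 0 := by positivity
      have h1 : (fun u : ℝ => wD n k * Real.exp (-u * k / ((k:ℝ)+1)))
          = fun u : ℝ => wS n k * (((k:ℝ)/((k:ℝ)+1)) * Real.exp (-u * ((k:ℝ)/((k:ℝ)+1)))) := by
        funext u
        have harg : -u * (k:ℝ) / ((k:ℝ)+1) = -u * ((k:ℝ)/((k:ℝ)+1)) := by ring
        rw [harg]
        simp only [wS, wD]
        field_simp
      rw [h1, intervalIntegral.integral_const_mul, integral_exp_term]
      have ha : -γ₁ * ((k:ℝ)/((k:ℝ)+1)) = -γ₁ * (k:ℝ) / ((k:ℝ)+1) := by ring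
      have hb : -γ₂ * ((k:ℝ)/((k:ℝ)+1)) = -γ₂ * (k:ℝ) / ((k:ℝ)+1) := by ring
      rw [ha, hb]
      ring
    have hdiff : Sn n γ₁ - Sn n γ₂ = ∫ u in γ₁..γ₂, Dn n u := by
      unfold Sn Dn
      rw [← Finset.sum_sub_distrib, Finset.sum_congr rfl hterm]
      rw [← intervalIntegral.integral_finset_sum
        (fun k _ => ((by fun_prop :
          Continuous fun u : ℝ => wD n k * Real.exp (-u * k / ((k:ℝ)+1))).intervalIntegrable γ₁ γ₂))]
    have hpos : 0 < ∫ u in γ₁..γ₂, Dn n u := by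
      refine intervalIntegral_pos_of_pos_on (hcontD.intervalIntegrable γ₁ γ₂) ?_ h12
      intro x hx
      exact hDpos x (hγ₁.trans hx.1.le)
    linarith [hdiff ▸ hpos]
  · -- value at 0
    have h0 : Sn n 0 = P (wS n) n 0 1 := by
      unfold Sn P
      refine Finset.sum_congr rfl fun k _ => ?_
      norm_num
    rw [h0, hS0]

end SERAux

/-- The SER is strictly decreasing on `[0, ∞)`, lies strictly between `0` and `1`,
and equals `(M-1)/M` at `γ = 0`. -/
theorem SER_strictAnti_and_bounds (M : ℕ) (hM : 2 ≤ M) :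
    (∀ γ₁ γ₂ : ℝ, 0 ≤ γ₁ → γ₁ < γ₂ → SER γ₂ M < SER γ₁ M)
    ∧ (∀ γ : ℝ, 0 ≤ γ → 0 < SER γ M ∧ SER γ M < 1)
    ∧ SER 0 M = ((M : ℝ) - 1) / M := by
  have hn : 1 ≤ M - 1 := by omega
  have hSER : ∀ γ : ℝ, SER γ M = SERAux.Sn (M-1) γ := by
    intro γ
    unfold SER SERAux.Sn SERAux.wS
    exact Finset.sum_congr rfl fun k _ => by ring
  obtain ⟨hmono, hbd, h0⟩ := SERAux.main (M-1) hn
  have hcast : ((M - 1 : ℕ) : ℝ) = (M : ℝ) - 1 := by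
    rw [Nat.cast_sub (by omega), Nat.cast_one]
  refine ⟨fun γ₁ γ₂ h1 h2 => ?_, fun γ hγ => ?_, ?_⟩
  · rw [hSER γ₁, hSER γ₂]
    exact hmono γ₁ γ₂ h1 h2
  · rw [hSER γ]
    exact hbd γ hγ
  · rw [hSER 0, h0, hcast]
    congr 1
    ring
end

section
/- The first-order Marcum Q-function is strictly increasing in its first argument: for every b > 0 and all 0 ≤ a₁ < a₂, one has Q₁(a₁, b) < Q₁(a₂, b), where Q₁(a, b) = ∫_b^∞ x·exp(−(x²+a²)/2)·I₀(a·x) dx. -/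
open MeasureTheory

open Set Filter Finset

lemma exp_tsum (x : ℝ) : Real.exp x = ∑' n : ℕ, x ^ n / n.factorial := by
  rw [Real.exp_eq_exp_ℝ, NormedSpace.exp_eq_tsum_div]

noncomputable def Pfun : ℕ → ℝ → ℝ
  | 0 => fun x => -Real.exp (-x ^ 2 / 2)
  | (k + 1) => fun x => -(x ^ (2 * (k + 1)) * Real.exp (-x ^ 2 / 2)) + (2 * (k + 1)) * Pfun k x

lemma hasDerivAt_exp_neg_sq (x : ℝ) :
    HasDerivAt (fun x : ℝ => Real.exp (-x ^ 2 / 2)) (-x * Real.exp (-x ^ 2 / 2)) x := by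
  have h1 : HasDerivAt (fun x : ℝ => -x ^ 2 / 2) (-x) x := by
    have := ((hasDerivAt_pow 2 x).neg).div_const 2
    refine this.congr_deriv (Eq.symm ?_)
    push_cast; ring
  have := (Real.hasDerivAt_exp (-x ^ 2 / 2)).comp x h1
  refine this.congr_deriv (Eq.symm ?_)
  ring

lemma Pfun_hasDerivAt (k : ℕ) (x : ℝ) :
    HasDerivAt (Pfun k) (x ^ (2 * k + 1) * Real.exp (-x ^ 2 / 2)) x := by
  induction k with
  | zero =>
    have := (hasDerivAt_exp_neg_sq x).neg
    refine this.congr_deriv (Eq.symm ?_)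
    ring
  | succ k ih =>
    have h1 : HasDerivAt (fun x : ℝ => x ^ (2 * (k + 1)) * Real.exp (-x ^ 2 / 2))
        ((2 * (k + 1) : ℕ) * x ^ (2 * (k + 1) - 1) * Real.exp (-x ^ 2 / 2)
          + x ^ (2 * (k + 1)) * (-x * Real.exp (-x ^ 2 / 2))) x :=
      (hasDerivAt_pow (2 * (k + 1)) x).mul (hasDerivAt_exp_neg_sq x)
    have h2 := (h1.neg).add ((ih.const_mul (2 * ((k : ℝ) + 1))))
    have : Pfun (k + 1) = fun x =>
        -(x ^ (2 * (k + 1)) * Real.exp (-x ^ 2 / 2)) + (2 * (k + 1)) * Pfun k x := rfl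
    rw [this]
    have h3 : 2 * (k + 1) - 1 = 2 * k + 1 := by omega
    rw [h3] at h2
    refine h2.congr_deriv (Eq.symm ?_)
    push_cast
    ring

lemma tendsto_pow_mul_exp_neg_sq (n : ℕ) :
    Tendsto (fun x : ℝ => x ^ n * Real.exp (-x ^ 2 / 2)) atTop (nhds 0) := by
  apply tendsto_of_tendsto_of_tendsto_of_le_of_le' tendsto_const_nhds
    (Real.tendsto_pow_mul_exp_neg_atTop_nhds_zero n)
  · filter_upwards [eventually_ge_atTop (0 : ℝ)] with x hx
    positivity
  · filter_upwards [eventually_ge_atTop (2 : ℝ)] with x hx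
    have hx0 : (0 : ℝ) ≤ x := by linarith
    have h1 : -x ^ 2 / 2 ≤ -x := by nlinarith
    exact mul_le_mul_of_nonneg_left (Real.exp_le_exp.mpr h1) (by positivity)

lemma Pfun_tendsto (k : ℕ) : Tendsto (Pfun k) atTop (nhds 0) := by
  induction k with
  | zero =>
    have := (tendsto_pow_mul_exp_neg_sq 0).neg
    simpa [Pfun] using this
  | succ k ih =>
    have h1 := ((tendsto_pow_mul_exp_neg_sq (2 * (k + 1))).neg).add
      (ih.const_mul (2 * ((k : ℝ) + 1)))
    have : Pfun (k + 1) = fun x =>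
        -(x ^ (2 * (k + 1)) * Real.exp (-x ^ 2 / 2)) + (2 * (k + 1)) * Pfun k x := rfl
    rw [this]
    simpa using h1

lemma Pfun_val (k : ℕ) (b : ℝ) :
    Pfun k b = -(2 ^ k * k.factorial *
      (Real.exp (-(b ^ 2 / 2)) * ∑ j ∈ Finset.range (k + 1), (b ^ 2 / 2) ^ j / j.factorial)) := by
  induction k with
  | zero =>
    simp only [Pfun]
    norm_num
    rw [show -(b ^ 2) / 2 = -(b ^ 2 / 2) by ring]
  | succ k ih =>
    have : Pfun (k + 1) b =
        -(b ^ (2 * (k + 1)) * Real.exp (-b ^ 2 / 2)) + (2 * (k + 1)) * Pfun k b := rfl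
    rw [this, ih, Finset.sum_range_succ (n := k + 1)]
    have hfac : ((k + 1).factorial : ℝ) = (k + 1) * k.factorial := by
      push_cast [Nat.factorial_succ]; ring
    have hfk : ((k.factorial : ℝ)) ≠ 0 := Nat.cast_ne_zero.mpr k.factorial_ne_zero
    have hb2 : b ^ (2 * (k + 1)) = (b ^ 2) ^ (k + 1) := by rw [pow_mul]
    rw [hfac, hb2]
    have hexp : Real.exp (-b ^ 2 / 2) = Real.exp (-(b ^ 2 / 2)) := by ring_nf
    rw [hexp]
    field_simp
    have h2k : (1 / 2 : ℝ) ^ k * 2 ^ k = 1 := by rw [← mul_pow]; norm_num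
    linear_combination (b ^ 2 * b ^ (k * 2)) * h2k

lemma integrableOn_pow_exp (n : ℕ) (b : ℝ) :
    IntegrableOn (fun x : ℝ => x ^ n * Real.exp (-x ^ 2 / 2)) (Set.Ioi b) := by
  have hs : (-1 : ℝ) < (n : ℝ) := lt_of_lt_of_le (by norm_num) (Nat.cast_nonneg n)
  have h := integrable_rpow_mul_exp_neg_mul_sq (b := (1/2 : ℝ)) (by norm_num) hs
  have heq : (fun x : ℝ => x ^ (n : ℝ) * Real.exp (-(1/2) * x ^ 2))
      = fun x : ℝ => x ^ n * Real.exp (-x ^ 2 / 2) := by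
    funext x
    rw [Real.rpow_natCast]
    ring_nf
  rw [heq] at h
  exact h.integrableOn

lemma integral_pow_exp (k : ℕ) (b : ℝ) :
    ∫ x in Set.Ioi b, x ^ (2 * k + 1) * Real.exp (-x ^ 2 / 2)
      = 2 ^ k * k.factorial *
        (Real.exp (-(b ^ 2 / 2)) * ∑ j ∈ Finset.range (k + 1), (b ^ 2 / 2) ^ j / j.factorial) := by
  have h := integral_Ioi_of_hasDerivAt_of_tendsto'
    (f := Pfun k) (f' := fun x => x ^ (2 * k + 1) * Real.exp (-x ^ 2 / 2)) (a := b)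
    (fun x _ => Pfun_hasDerivAt k x) (integrableOn_pow_exp (2 * k + 1) b) (Pfun_tendsto k)
  rw [h, Pfun_val]
  ring

lemma marcum_eq_tsum (a b : ℝ) (hb : 0 < b) :
    marcumQ1 a b = ∑' k : ℕ,
      (Real.exp (-(a ^ 2 / 2)) * (a ^ 2 / 2) ^ k / k.factorial) *
      (Real.exp (-(b ^ 2 / 2)) * ∑ j ∈ Finset.range (k + 1), (b ^ 2 / 2) ^ j / j.factorial) := by
  set C : ℕ → ℝ := fun k => Real.exp (-(a ^ 2 / 2)) * (a ^ 2 / 4) ^ k / (k.factorial : ℝ) ^ 2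
    with hC
  have hCnn : ∀ k, 0 ≤ C k := fun k => by rw [hC]; positivity
  have hpt : ∀ x : ℝ, x * Real.exp (-(x ^ 2 + a ^ 2) / 2) * besselI0 (a * x)
      = ∑' k : ℕ, C k * (x ^ (2 * k + 1) * Real.exp (-x ^ 2 / 2)) := by
    intro x
    rw [besselI0, ← tsum_mul_left]
    refine tsum_congr fun k => ?_
    have h1 : ((a * x) / 2) ^ (2 * k) = (a ^ 2 / 4) ^ k * x ^ (2 * k) := by
      rw [pow_mul, pow_mul, ← mul_pow]
      congr 1
      ring
    have h2 : Real.exp (-(x ^ 2 + a ^ 2) / 2)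
        = Real.exp (-x ^ 2 / 2) * Real.exp (-(a ^ 2 / 2)) := by
      rw [← Real.exp_add]
      congr 1
      ring
    rw [h1, h2, hC, pow_succ, pow_mul]
    ring
  have hint : ∀ k : ℕ, Integrable
      (fun x : ℝ => C k * (x ^ (2 * k + 1) * Real.exp (-x ^ 2 / 2)))
      (volume.restrict (Set.Ioi b)) :=
    fun k => ((integrableOn_pow_exp (2 * k + 1) b).const_mul (C k))
  have hval : ∀ k : ℕ,
      (∫ x in Set.Ioi b, C k * (x ^ (2 * k + 1) * Real.exp (-x ^ 2 / 2)))
      = (Real.exp (-(a ^ 2 / 2)) * (a ^ 2 / 2) ^ k / k.factorial) *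
        (Real.exp (-(b ^ 2 / 2)) * ∑ j ∈ Finset.range (k + 1), (b ^ 2 / 2) ^ j / j.factorial) := by
    intro k
    rw [integral_const_mul, integral_pow_exp k b]
    have hfk : ((k.factorial : ℝ)) ≠ 0 := Nat.cast_ne_zero.mpr k.factorial_ne_zero
    have h24 : (a ^ 2 / 4) ^ k * 2 ^ k = (a ^ 2 / 2) ^ k := by
      rw [← mul_pow]; congr 1; ring
    rw [hC]
    field_simp
    exact h24
  have hnorm : ∀ k : ℕ,
      (∫ x in Set.Ioi b, ‖C k * (x ^ (2 * k + 1) * Real.exp (-x ^ 2 / 2))‖)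
      = ∫ x in Set.Ioi b, C k * (x ^ (2 * k + 1) * Real.exp (-x ^ 2 / 2)) := by
    intro k
    refine MeasureTheory.setIntegral_congr_fun measurableSet_Ioi fun x hx => ?_
    have hx0 : (0 : ℝ) < x := lt_trans hb hx
    exact Real.norm_of_nonneg (by positivity)
  have hsum : Summable fun k : ℕ =>
      ∫ x in Set.Ioi b, ‖C k * (x ^ (2 * k + 1) * Real.exp (-x ^ 2 / 2))‖ := by
    apply Summable.of_nonneg_of_le
      (fun k => by
        rw [hnorm k]
        exact MeasureTheory.integral_nonneg_of_ae (by
          filter_upwards [MeasureTheory.ae_restrict_mem measurableSet_Ioi] with x hx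
          have hx0 : (0 : ℝ) < x := lt_trans hb hx
          positivity))
      (fun k => ?_)
      ((Real.summable_pow_div_factorial (a ^ 2 / 2)).mul_left
        (Real.exp (-(a ^ 2 / 2)) * Real.exp (-(b ^ 2 / 2)) * Real.exp (b ^ 2 / 2)))
    rw [hnorm k, hval k]
    have hsk : ∑ j ∈ Finset.range (k + 1), (b ^ 2 / 2) ^ j / j.factorial
        ≤ Real.exp (b ^ 2 / 2) := Real.sum_le_exp_of_nonneg (by positivity) (k + 1)
    have h1 : (0 : ℝ) ≤ Real.exp (-(a ^ 2 / 2)) * (a ^ 2 / 2) ^ k / k.factorial := by positivity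
    calc (Real.exp (-(a ^ 2 / 2)) * (a ^ 2 / 2) ^ k / k.factorial) *
          (Real.exp (-(b ^ 2 / 2)) * ∑ j ∈ Finset.range (k + 1), (b ^ 2 / 2) ^ j / j.factorial)
        ≤ (Real.exp (-(a ^ 2 / 2)) * (a ^ 2 / 2) ^ k / k.factorial) *
          (Real.exp (-(b ^ 2 / 2)) * Real.exp (b ^ 2 / 2)) := by
          apply mul_le_mul_of_nonneg_left _ h1
          exact mul_le_mul_of_nonneg_left hsk (Real.exp_nonneg _)
      _ = Real.exp (-(a ^ 2 / 2)) * Real.exp (-(b ^ 2 / 2)) * Real.exp (b ^ 2 / 2) *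
          ((a ^ 2 / 2) ^ k / k.factorial) := by ring
  have hswap := MeasureTheory.integral_tsum_of_summable_integral_norm hint hsum
  rw [marcumQ1]
  rw [show (∫ x in Set.Ioi b, x * Real.exp (-(x ^ 2 + a ^ 2) / 2) * besselI0 (a * x))
      = ∫ x in Set.Ioi b, ∑' k : ℕ, C k * (x ^ (2 * k + 1) * Real.exp (-x ^ 2 / 2)) from
    MeasureTheory.integral_congr_ae (Filter.Eventually.of_forall fun x => hpt x)]
  rw [← hswap]
  exact tsum_congr hval

lemma tsum_p_eq_one (lam : ℝ) :
    ∑' k : ℕ, Real.exp (-lam) * lam ^ k / k.factorial = 1 := by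
  have h : ∀ k : ℕ, Real.exp (-lam) * lam ^ k / k.factorial
      = Real.exp (-lam) * (lam ^ k / k.factorial) := fun k => by ring
  rw [tsum_congr h, tsum_mul_left, ← exp_tsum, Real.exp_neg]
  exact inv_mul_cancel₀ (Real.exp_ne_zero lam)

lemma summable_p (lam : ℝ) :
    Summable (fun k : ℕ => Real.exp (-lam) * lam ^ k / k.factorial) := by
  have h : ∀ k : ℕ, Real.exp (-lam) * lam ^ k / k.factorial
      = Real.exp (-lam) * (lam ^ k / k.factorial) := fun k => by ring
  rw [funext h]
  exact (Real.summable_pow_div_factorial lam).mul_left _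

lemma tsum_swap (lam mu : ℝ) (hl : 0 ≤ lam) (hm : 0 ≤ mu) :
    ∑' k : ℕ, (Real.exp (-lam) * lam ^ k / k.factorial) *
        (Real.exp (-mu) * ∑ j ∈ Finset.range (k + 1), mu ^ j / j.factorial)
    = ∑' j : ℕ, (Real.exp (-mu) * mu ^ j / j.factorial) *
        (1 - Real.exp (-lam) * ∑ i ∈ Finset.range j, lam ^ i / i.factorial) := by
  set p : ℕ → ℝ := fun k => Real.exp (-lam) * lam ^ k / k.factorial with hp
  set q : ℕ → ℝ := fun j => Real.exp (-mu) * mu ^ j / j.factorial with hq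
  have hpnn : ∀ k, 0 ≤ p k := fun k => by rw [hp]; positivity
  have hqnn : ∀ j, 0 ≤ q j := fun j => by rw [hq]; positivity
  have hpsum : Summable p := summable_p lam
  have hqsum : Summable q := summable_p mu
  set f : ℕ → ℕ → ℝ := fun j k => if j ≤ k then p k * q j else 0 with hf
  have hfnn : ∀ j k, 0 ≤ f j k := by
    intro j k
    rw [hf]; dsimp only; split
    · exact mul_nonneg (hpnn k) (hqnn j)
    · exact le_rfl
  have hfle : ∀ j k, f j k ≤ q j * p k := by
    intro j k
    rw [hf]; dsimp only; split
    · rw [mul_comm]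
    · exact mul_nonneg (hqnn j) (hpnn k)
  have huncurry : Summable (Function.uncurry f) := by
    refine Summable.of_nonneg_of_le (fun z => hfnn z.1 z.2) (fun z => hfle z.1 z.2)
      (hqsum.mul_of_nonneg hpsum hqnn hpnn)
  have h1 : ∀ j, Summable (f j) := fun j =>
    Summable.of_nonneg_of_le (hfnn j) (hfle j) (hpsum.mul_left (q j))
  have h2 : ∀ k, Summable fun j => f j k := fun k =>
    Summable.of_nonneg_of_le (fun j => hfnn j k) (fun j => hfle j k)
      (hqsum.mul_right (p k))
  have hcomm : ∑' k, ∑' j, f j k = ∑' j, ∑' k, f j k :=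
    Summable.tsum_comm' huncurry h1 h2
  have hLHS : ∀ k : ℕ, p k * (Real.exp (-mu) * ∑ j ∈ Finset.range (k + 1), mu ^ j / j.factorial)
      = ∑' j, f j k := by
    intro k
    have hz : ∀ j ∉ Finset.range (k + 1), f j k = 0 := by
      intro j hj
      rw [hf]
      exact if_neg (by simpa [Nat.lt_succ_iff] using hj)
    rw [tsum_eq_sum hz,
      show Real.exp (-mu) * ∑ j ∈ Finset.range (k + 1), mu ^ j / j.factorial
        = ∑ j ∈ Finset.range (k + 1), q j by
          rw [Finset.mul_sum]; exact Finset.sum_congr rfl fun j _ => by rw [hq]; ring,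
      Finset.mul_sum]
    refine Finset.sum_congr rfl fun j hj => ?_
    rw [hf]
    dsimp only
    rw [if_pos (Nat.lt_succ_iff.mp (Finset.mem_range.mp hj))]
  have hRHS : ∀ j : ℕ, ∑' k, f j k
      = q j * (1 - Real.exp (-lam) * ∑ i ∈ Finset.range j, lam ^ i / i.factorial) := by
    intro j
    have hsplit : ∀ k, f j k = q j * p k - q j * (if k < j then p k else 0) := by
      intro k
      rw [hf]; dsimp only
      by_cases h : j ≤ k
      · rw [if_pos h, if_neg (Nat.not_lt.mpr h)]
        ring
      · rw [if_neg h, if_pos (Nat.not_le.mp h)]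
        ring
    have hs1 : Summable (fun k => q j * p k) := hpsum.mul_left (q j)
    have hs2 : Summable (fun k => q j * (if k < j then p k else 0)) := by
      apply summable_of_ne_finset_zero (s := Finset.range j)
      intro k hk
      rw [if_neg (by simpa using hk), mul_zero]
    rw [tsum_congr hsplit, Summable.tsum_sub hs1 hs2, tsum_mul_left, tsum_mul_left]
    have hpa : ∑' k, p k = 1 := tsum_p_eq_one lam
    have hpb : ∑' k, (if k < j then p k else 0) = ∑ i ∈ Finset.range j, p i := by
      rw [tsum_eq_sum (s := Finset.range j) (fun k hk => if_neg (by simpa using hk))]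
      exact Finset.sum_congr rfl fun i hi => if_pos (Finset.mem_range.mp hi)
    rw [hpa, hpb]
    have : ∑ i ∈ Finset.range j, p i
        = Real.exp (-lam) * ∑ i ∈ Finset.range j, lam ^ i / i.factorial := by
      rw [Finset.mul_sum]
      exact Finset.sum_congr rfl fun i _ => by rw [hp]; ring
    rw [this]
    ring
  calc ∑' k, p k * (Real.exp (-mu) * ∑ j ∈ Finset.range (k + 1), mu ^ j / j.factorial)
      = ∑' k, ∑' j, f j k := tsum_congr hLHS
    _ = ∑' j, ∑' k, f j k := hcomm
    _ = ∑' j, q j * (1 - Real.exp (-lam) * ∑ i ∈ Finset.range j, lam ^ i / i.factorial) :=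
        tsum_congr hRHS

lemma hasDerivAt_expsum (m : ℕ) (l : ℝ) :
    HasDerivAt (fun l : ℝ => Real.exp (-l) * ∑ i ∈ Finset.range (m + 1), l ^ i / i.factorial)
      (-(Real.exp (-l) * (l ^ m / m.factorial))) l := by
  have hS : HasDerivAt (fun l : ℝ => ∑ i ∈ Finset.range (m + 1), l ^ i / i.factorial)
      (∑ i ∈ Finset.range m, l ^ i / i.factorial) l := by
    have h := HasDerivAt.fun_sum
      (fun i (_ : i ∈ Finset.range (m + 1)) => (hasDerivAt_pow i l).div_const (i.factorial : ℝ))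
    refine h.congr_deriv (Eq.symm ?_)
    rw [Finset.sum_range_succ' (fun i => (i : ℝ) * l ^ (i - 1) / (i.factorial : ℝ)) m]
    simp only [Nat.cast_zero, Nat.factorial_zero, Nat.cast_one, zero_mul, zero_div, add_zero]
    refine Finset.sum_congr rfl fun i _ => ?_
    rw [Nat.factorial_succ]
    push_cast
    rw [mul_div_mul_left _ _ (by positivity : ((i : ℝ) + 1) ≠ 0)]
  have he : HasDerivAt (fun l : ℝ => Real.exp (-l)) (-Real.exp (-l)) l := by
    have := (Real.hasDerivAt_exp (-l)).comp l (hasDerivAt_neg l)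
    refine this.congr_deriv (Eq.symm ?_)
    ring
  have := he.mul hS
  refine this.congr_deriv (Eq.symm ?_)
  rw [Finset.sum_range_succ]
  ring

lemma expsum_antitone (j : ℕ) {x y : ℝ} (hx : 0 ≤ x) (hxy : x ≤ y) :
    Real.exp (-y) * ∑ i ∈ Finset.range j, y ^ i / i.factorial
      ≤ Real.exp (-x) * ∑ i ∈ Finset.range j, x ^ i / i.factorial := by
  cases j with
  | zero => simp
  | succ m =>
    have hanti : AntitoneOn
        (fun l : ℝ => Real.exp (-l) * ∑ i ∈ Finset.range (m + 1), l ^ i / i.factorial)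
        (Set.Ici 0) := by
      apply antitoneOn_of_deriv_nonpos (convex_Ici 0)
      · exact Continuous.continuousOn (by fun_prop)
      · intro l _
        exact (hasDerivAt_expsum m l).differentiableAt.differentiableWithinAt
      · intro l hl
        rw [interior_Ici] at hl
        rw [(hasDerivAt_expsum m l).deriv]
        have : (0 : ℝ) ≤ Real.exp (-l) * (l ^ m / m.factorial) := by
          have hl0 : (0 : ℝ) ≤ l := le_of_lt hl
          positivity
        linarith
    exact hanti hx (le_trans hx hxy) hxy

lemma expsum_le_one (j : ℕ) {l : ℝ} (hl : 0 ≤ l) :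
    Real.exp (-l) * ∑ i ∈ Finset.range j, l ^ i / i.factorial ≤ 1 := by
  have h := Real.sum_le_exp_of_nonneg hl j
  have h2 : Real.exp (-l) * ∑ i ∈ Finset.range j, l ^ i / i.factorial
      ≤ Real.exp (-l) * Real.exp l := mul_le_mul_of_nonneg_left h (Real.exp_nonneg _)
  rwa [← Real.exp_add, neg_add_cancel, Real.exp_zero] at h2

/-- The Marcum Q-function is strictly increasing in its first argument. -/
theorem marcumQ1_strictMono_fst (b : ℝ) (hb : 0 < b) (a₁ a₂ : ℝ)
    (ha₁ : 0 ≤ a₁) (h : a₁ < a₂) :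
    marcumQ1 a₁ b < marcumQ1 a₂ b := by
  have hrep : ∀ a : ℝ, marcumQ1 a b = ∑' j : ℕ,
      (Real.exp (-(b ^ 2 / 2)) * (b ^ 2 / 2) ^ j / j.factorial) *
        (1 - Real.exp (-(a ^ 2 / 2)) * ∑ i ∈ Finset.range j, (a ^ 2 / 2) ^ i / i.factorial) := by
    intro a
    rw [marcum_eq_tsum a b hb, tsum_swap (a ^ 2 / 2) (b ^ 2 / 2) (by positivity) (by positivity)]
  rw [hrep a₁, hrep a₂]
  have ha₂ : 0 < a₂ := lt_of_le_of_lt ha₁ h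
  have hlam : a₁ ^ 2 / 2 < a₂ ^ 2 / 2 := by nlinarith
  have hl1 : (0 : ℝ) ≤ a₁ ^ 2 / 2 := by positivity
  have hl2 : (0 : ℝ) ≤ a₂ ^ 2 / 2 := by positivity
  have hmu : (0 : ℝ) < b ^ 2 / 2 := by positivity
  set q : ℕ → ℝ := fun j => Real.exp (-(b ^ 2 / 2)) * (b ^ 2 / 2) ^ j / j.factorial with hq
  have hqpos : ∀ j, 0 < q j := fun j => by
    rw [hq]; dsimp only
    have := j.factorial_pos
    positivity
  have hT1 : ∀ (l : ℝ), 0 ≤ l →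
      0 ≤ 1 - Real.exp (-l) * ∑ i ∈ Finset.range 0, l ^ i / i.factorial := by
    intro l _; simp
  have hTnn : ∀ (j : ℕ) (l : ℝ), 0 ≤ l →
      0 ≤ 1 - Real.exp (-l) * ∑ i ∈ Finset.range j, l ^ i / i.factorial := by
    intro j l hl
    have := expsum_le_one j hl
    linarith
  have hTle1 : ∀ (j : ℕ) (l : ℝ), 0 ≤ l →
      1 - Real.exp (-l) * ∑ i ∈ Finset.range j, l ^ i / i.factorial ≤ 1 := by
    intro j l hl
    have hE : 0 ≤ Real.exp (-l) * ∑ i ∈ Finset.range j, l ^ i / i.factorial := by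
      have hs : 0 ≤ ∑ i ∈ Finset.range j, l ^ i / i.factorial :=
        Finset.sum_nonneg fun i _ => by positivity
      positivity
    linarith
  apply Summable.tsum_lt_tsum_of_nonneg (i := 1)
  · intro j
    exact mul_nonneg (hqpos j).le (hTnn j _ hl1)
  · intro j
    refine mul_le_mul_of_nonneg_left ?_ (hqpos j).le
    have := expsum_antitone j hl1 hlam.le
    linarith
  · refine mul_lt_mul_of_pos_left ?_ (hqpos 1)
    have hexp : Real.exp (-(a₂ ^ 2 / 2)) < Real.exp (-(a₁ ^ 2 / 2)) :=
      Real.exp_lt_exp.mpr (by linarith)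
    simp only [Finset.range_one, Finset.sum_singleton, pow_zero, Nat.factorial_zero,
      Nat.cast_one]
    norm_num
    linarith
  · apply Summable.of_nonneg_of_le
      (fun j => mul_nonneg (hqpos j).le (hTnn j _ hl2))
      (fun j => ?_) (summable_p (b ^ 2 / 2))
    calc q j * (1 - Real.exp (-(a₂ ^ 2 / 2)) * ∑ i ∈ Finset.range j, (a₂ ^ 2 / 2) ^ i / i.factorial)
        ≤ q j * 1 := mul_le_mul_of_nonneg_left (hTle1 j _ hl2) (hqpos j).le
      _ = q j := mul_one _
end

section
/- For every real a > 0 and every b ≥ 0, ∫_0^∞ x·exp(−a·x²)·I₀(b·x) dx = (1/(2a))·exp(b²/(4a)), where I₀ is the modified Bessel function of the first kind of order zero. -/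
open MeasureTheory

lemma term_integrable (a b : ℝ) (ha : 0 < a) (k : ℕ) :
    IntegrableOn (fun x : ℝ => x * Real.exp (-a * x ^ 2) *
      ((b * x / 2) ^ (2 * k) / ((Nat.factorial k : ℝ)) ^ 2)) (Set.Ioi 0) := by
  have hq : (-1 : ℝ) < ((2 * k + 1 : ℕ) : ℝ) := by
    have : (0:ℝ) ≤ ((2 * k + 1 : ℕ) : ℝ) := Nat.cast_nonneg _
    linarith
  have h : IntegrableOn (fun x : ℝ => ((b / 2) ^ (2 * k) / ((Nat.factorial k : ℝ)) ^ 2) *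
      (x ^ (((2 * k + 1 : ℕ) : ℝ)) * Real.exp (-a * x ^ 2))) (Set.Ioi 0) :=
    (integrableOn_rpow_mul_exp_neg_mul_sq ha hq).const_mul _
  refine h.congr_fun (fun x hx => ?_) measurableSet_Ioi
  have hx0 : (0:ℝ) < x := hx
  simp only [Real.rpow_natCast]
  ring

lemma term_eval (a b : ℝ) (ha : 0 < a) (k : ℕ) :
    (∫ x in Set.Ioi (0 : ℝ), x * Real.exp (-a * x ^ 2) *
        ((b * x / 2) ^ (2 * k) / ((Nat.factorial k : ℝ)) ^ 2))
      = 1 / (2 * a) * (b ^ 2 / (4 * a)) ^ k / (Nat.factorial k : ℝ) := by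
  have hq : (-1 : ℝ) < (2 * k + 1 : ℝ) := by
    have : (0:ℝ) ≤ (k:ℝ) := Nat.cast_nonneg _
    linarith
  have key := integral_rpow_mul_exp_neg_mul_rpow (p := 2) (q := (2 * k + 1 : ℝ))
    (b := a) two_pos hq ha
  have h1 : (∫ x in Set.Ioi (0 : ℝ), x * Real.exp (-a * x ^ 2) *
        ((b * x / 2) ^ (2 * k) / ((Nat.factorial k : ℝ)) ^ 2))
      = ((b / 2) ^ (2 * k) / ((Nat.factorial k : ℝ)) ^ 2) *
        ∫ x in Set.Ioi (0 : ℝ), x ^ (2 * (k:ℝ) + 1) * Real.exp (-a * x ^ (2:ℝ)) := by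
    rw [← integral_const_mul]
    refine setIntegral_congr_fun measurableSet_Ioi (fun x hx => ?_)
    have hx0 : (0:ℝ) < x := hx
    have h2 : x ^ (2 * (k:ℝ) + 1) = x ^ (2 * k + 1) := by
      rw [show (2 * (k:ℝ) + 1) = ((2 * k + 1 : ℕ) : ℝ) by push_cast; ring, Real.rpow_natCast]
    have h3 : x ^ (2:ℝ) = x ^ 2 := by
      rw [show ((2:ℝ)) = ((2:ℕ):ℝ) by norm_num, Real.rpow_natCast]
    rw [h2, h3]
    ring
  rw [h1, key]
  have hgamma : Real.Gamma ((2 * (k:ℝ) + 1 + 1) / 2) = (Nat.factorial k : ℝ) := by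
    rw [show (2 * (k:ℝ) + 1 + 1) / 2 = (k:ℝ) + 1 by ring, Real.Gamma_nat_eq_factorial]
  have hpow : a ^ (-(2 * (k:ℝ) + 1 + 1) / 2) = (a ^ (k + 1 : ℕ))⁻¹ := by
    rw [show (-(2 * (k:ℝ) + 1 + 1) / 2) = -((k + 1 : ℕ) : ℝ) by push_cast; ring,
      Real.rpow_neg ha.le, Real.rpow_natCast]
  rw [hgamma, hpow]
  have hfac : (Nat.factorial k : ℝ) ≠ 0 := Nat.cast_ne_zero.mpr k.factorial_ne_zero
  have ha' : a ≠ 0 := ha.ne'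
  rw [pow_mul, div_pow b, show ((2:ℝ) ^ 2) = 4 by norm_num,
    div_pow (b ^ 2) (4 * a), mul_pow (4:ℝ) a, pow_succ]
  have h4 : (4:ℝ) ^ k ≠ 0 := by positivity
  have hak : a ^ k ≠ 0 := pow_ne_zero _ ha'
  field_simp
  have h5 : (b ^ 2 / 4) ^ k * (4:ℝ) ^ k = (b ^ 2) ^ k := by
    rw [← mul_pow, div_mul_cancel₀ _ (by norm_num : (4:ℝ) ≠ 0)]
  rw [pow_succ]; linear_combination (a * a ^ k) * h5

/-- The standard integral identity `∫₀^∞ x e^{-a x²} I₀(b x) dx = e^{b²/(4a)} / (2a)`. -/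
theorem integral_besselI0_gaussian (a b : ℝ) (ha : 0 < a) (hb : 0 ≤ b) :
    (∫ x in Set.Ioi (0 : ℝ), x * Real.exp (-a * x ^ 2) * besselI0 (b * x))
      = 1 / (2 * a) * Real.exp (b ^ 2 / (4 * a)) := by
  set F : ℕ → ℝ → ℝ := fun k x => x * Real.exp (-a * x ^ 2) *
      ((b * x / 2) ^ (2 * k) / ((Nat.factorial k : ℝ)) ^ 2) with hF
  have hsum : Summable (fun k : ℕ => 1 / (2 * a) * (b ^ 2 / (4 * a)) ^ k /
      (Nat.factorial k : ℝ)) := by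
    simp_rw [mul_div_assoc]
    exact (Real.summable_pow_div_factorial _).mul_left _
  have hpos : ∀ k : ℕ, ∀ x ∈ Set.Ioi (0:ℝ), 0 ≤ F k x := by
    intro k x hx
    have hx0 : (0:ℝ) < x := hx
    have h5 : (0:ℝ) ≤ (b * x / 2) ^ (2 * k) := by
      rw [pow_mul]; positivity
    have := Real.exp_pos (-a * x ^ 2)
    simp only [hF]
    positivity
  have hnorm : ∀ k : ℕ, (∫ x in Set.Ioi (0:ℝ), ‖F k x‖)
      = 1 / (2 * a) * (b ^ 2 / (4 * a)) ^ k / (Nat.factorial k : ℝ) := by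
    intro k
    rw [← term_eval a b ha k]
    exact setIntegral_congr_fun measurableSet_Ioi
      (fun x hx => Real.norm_of_nonneg (hpos k x hx))
  have hswap : (∫ x in Set.Ioi (0 : ℝ), x * Real.exp (-a * x ^ 2) * besselI0 (b * x))
      = ∑' k : ℕ, ∫ x in Set.Ioi (0 : ℝ), F k x := by
    rw [show (∫ x in Set.Ioi (0 : ℝ), x * Real.exp (-a * x ^ 2) * besselI0 (b * x))
        = ∫ x in Set.Ioi (0 : ℝ), ∑' k : ℕ, F k x from
      setIntegral_congr_fun measurableSet_Ioi (fun x hx => by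
        rw [besselI0, ← tsum_mul_left])]
    refine (integral_tsum_of_summable_integral_norm (fun k => term_integrable a b ha k) ?_).symm
    refine Summable.congr ?_ (fun k => (hnorm k).symm)
    exact hsum
  rw [hswap]
  simp only [hF, term_eval a b ha]
  rw [Real.exp_eq_exp_ℝ, NormedSpace.exp_eq_tsum_div, ← tsum_mul_left]
  congr 1
  ext k
  rw [mul_div_assoc]
end

section
/- Let σ > 0, μ ≥ 0, let k ≥ 0 be an integer, and set γ = μ²/(2σ²). Then ∫_0^∞ f(r; μ, σ)·exp(−k·r²/(2σ²)) dr = (1/(k+1))·exp(−γ·k/(k+1)), where f(r; μ, σ) = (r/σ²)·exp(−(r²+μ²)/(2σ²))·I₀(rμ/σ²) is the Rician density. -/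
open MeasureTheory

lemma tsum_pow_div_factorial' (x : ℝ) : ∑' n : ℕ, x ^ n / (Nat.factorial n : ℝ) = Real.exp x := by
  rw [Real.exp_eq_exp_ℝ, NormedSpace.exp_eq_tsum_div]

lemma integral_pow_odd_mul_exp_neg_mul_sq {a : ℝ} (ha : 0 < a) (n : ℕ) :
    (∫ r in Set.Ioi (0:ℝ), r ^ (2*n+1) * Real.exp (-a * r ^ 2))
      = (Nat.factorial n : ℝ) / (2 * a ^ (n+1)) := by
  have hq : (-1 : ℝ) < ((2*n+1 : ℕ) : ℝ) :=
    lt_of_lt_of_le (by norm_num) (Nat.cast_nonneg _)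
  have h := integral_rpow_mul_exp_neg_mul_rpow (p := 2) (q := ((2*n+1 : ℕ) : ℝ))
    (by norm_num) hq ha
  have h2 : ∀ x : ℝ, x ^ ((2*n+1 : ℕ) : ℝ) * Real.exp (-a * x ^ (2:ℝ))
      = x ^ (2*n+1) * Real.exp (-a * x ^ 2) := by
    intro x
    rw [Real.rpow_natCast, show (2:ℝ) = ((2:ℕ):ℝ) by norm_num, Real.rpow_natCast]
  simp_rw [h2] at h
  rw [h]
  have he1 : (-(((2*n+1 : ℕ) : ℝ) + 1) / 2) = -(((n+1 : ℕ) : ℝ)) := by push_cast; ring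
  have he2 : ((((2*n+1 : ℕ) : ℝ)) + 1) / 2 = (n : ℝ) + 1 := by push_cast; ring
  rw [he1, he2, Real.Gamma_nat_eq_factorial, Real.rpow_neg ha.le, Real.rpow_natCast]
  have hfac : ((Nat.factorial n : ℝ)) ≠ 0 := Nat.cast_ne_zero.mpr (Nat.factorial_ne_zero n)
  have hpow : a ^ (n+1) ≠ 0 := pow_ne_zero _ ha.ne'
  field_simp

/-- The key integral `𝓘_k` from the SER derivation. -/
theorem rice_integral_exp (σ μ : ℝ) (hσ : 0 < σ) (hμ : 0 ≤ μ) (k : ℕ)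
    (γ : ℝ) (hγ : γ = μ ^ 2 / (2 * σ ^ 2)) :
    (∫ r in Set.Ioi (0 : ℝ), ricePdf σ μ r * Real.exp (-(k : ℝ) * r ^ 2 / (2 * σ ^ 2)))
      = 1 / ((k : ℝ) + 1) * Real.exp (-γ * k / ((k : ℝ) + 1)) := by
  have hσ2 : (0:ℝ) < σ ^ 2 := by positivity
  have hσ2' : σ ^ 2 ≠ 0 := hσ2.ne'
  set a : ℝ := ((k:ℝ)+1)/(2*σ^2) with ha_def
  have ha : 0 < a := by rw [ha_def]; positivity
  have hk1 : ((k:ℝ)+1) ≠ 0 := by positivity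
  -- the coefficient
  set C : ℕ → ℝ := fun n => (μ/σ^2/2)^(2*n) / ((Nat.factorial n : ℝ))^2 / σ^2 with hC_def
  have hC_nonneg : ∀ n, 0 ≤ C n := by
    intro n
    have h1 : (0:ℝ) ≤ μ/σ^2/2 := by positivity
    have : (0:ℝ) ≤ (μ/σ^2/2)^(2*n) := pow_nonneg h1 _
    rw [hC_def]
    positivity
  -- pointwise expansion
  have key : ∀ r : ℝ, ricePdf σ μ r * Real.exp (-(k : ℝ) * r ^ 2 / (2 * σ ^ 2))
      = ∑' n : ℕ, Real.exp (-γ) * (C n * (r^(2*n+1) * Real.exp (-a * r^2))) := by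
    intro r
    have h1 : ricePdf σ μ r * Real.exp (-(k : ℝ) * r ^ 2 / (2 * σ ^ 2))
        = (r / σ^2 * (Real.exp (-(r^2+μ^2)/(2*σ^2)) * Real.exp (-(k:ℝ)*r^2/(2*σ^2))))
            * besselI0 (r * μ / σ^2) := by
      rw [ricePdf]; ring
    rw [h1, besselI0, ← tsum_mul_left]
    refine tsum_congr fun n => ?_
    have he : (-(r^2+μ^2)/(2*σ^2) + (-(k:ℝ)*r^2/(2*σ^2))) = -γ + -(a*r^2) := by
      rw [hγ, ha_def]; field_simp; ring
    rw [← Real.exp_add, he, Real.exp_add, hC_def]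
    ring
  -- value of each term
  set T : ℕ → ℝ := fun n => Real.exp (-γ) * (1/((k:ℝ)+1)) * ((γ/((k:ℝ)+1))^n / (Nat.factorial n : ℝ)) with hT_def
  have hcoef : ∀ n : ℕ, Real.exp (-γ) * (C n * ((Nat.factorial n : ℝ) / (2 * a ^ (n+1)))) = T n := by
    intro n
    have hx : (μ/σ^2/2)^2 / a = γ/((k:ℝ)+1) := by
      rw [hγ, ha_def]; field_simp
    have hfac : ((Nat.factorial n : ℝ)) ≠ 0 := Nat.cast_ne_zero.mpr (Nat.factorial_ne_zero n)
    have han : a ^ n ≠ 0 := pow_ne_zero _ ha.ne'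
    have h2sa : 2 * σ^2 * a = (k:ℝ)+1 := by rw [ha_def]; field_simp
    have e1 : (μ/σ^2/2)^(2*n) = ((μ/σ^2/2)^2)^n := by rw [pow_mul]
    have e2 : a^(n+1) = a^n * a := pow_succ a n
    have e3 : ((μ/σ^2/2)^2/a)^n = ((μ/σ^2/2)^2)^n / a^n := div_pow _ _ _
    simp only [hT_def, hC_def]
    rw [e1, e2, ← hx, e3, ← h2sa]
    field_simp
  have hint_val : ∀ n : ℕ,
      (∫ r in Set.Ioi (0:ℝ), Real.exp (-γ) * (C n * (r^(2*n+1) * Real.exp (-a * r^2)))) = T n := by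
    intro n
    rw [integral_const_mul, integral_const_mul, integral_pow_odd_mul_exp_neg_mul_sq ha n]
    exact hcoef n
  have hint : ∀ n : ℕ, IntegrableOn
      (fun r : ℝ => Real.exp (-γ) * (C n * (r^(2*n+1) * Real.exp (-a * r^2)))) (Set.Ioi 0) := by
    intro n
    have hq : (-1 : ℝ) < ((2*n+1 : ℕ) : ℝ) :=
      lt_of_lt_of_le (by norm_num) (Nat.cast_nonneg _)
    have hb := integrableOn_rpow_mul_exp_neg_mul_sq ha hq
    have hb' : IntegrableOn (fun x : ℝ => x ^ (2*n+1) * Real.exp (-a * x ^ 2)) (Set.Ioi 0) := by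
      simpa only [Real.rpow_natCast] using hb
    exact (hb'.const_mul (C n)).const_mul _
  have hnorm_val : ∀ n : ℕ,
      (∫ r in Set.Ioi (0:ℝ), ‖Real.exp (-γ) * (C n * (r^(2*n+1) * Real.exp (-a * r^2)))‖) = T n := by
    intro n
    rw [← hint_val n]
    refine setIntegral_congr_fun measurableSet_Ioi (fun r hr => ?_)
    have hr0 : (0:ℝ) < r := hr
    have : (0:ℝ) ≤ Real.exp (-γ) * (C n * (r^(2*n+1) * Real.exp (-a * r^2))) := by
      have := hC_nonneg n
      positivity
    exact Real.norm_of_nonneg this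
  have hT_sum : Summable T := by
    rw [hT_def]
    exact (Real.summable_pow_div_factorial (γ/((k:ℝ)+1))).mul_left _
  have hSum : Summable (fun n : ℕ =>
      ∫ r in Set.Ioi (0:ℝ), ‖Real.exp (-γ) * (C n * (r^(2*n+1) * Real.exp (-a * r^2)))‖) :=
    hT_sum.congr (fun n => (hnorm_val n).symm)
  calc (∫ r in Set.Ioi (0 : ℝ), ricePdf σ μ r * Real.exp (-(k : ℝ) * r ^ 2 / (2 * σ ^ 2)))
      = ∫ r in Set.Ioi (0:ℝ), ∑' n : ℕ,
          Real.exp (-γ) * (C n * (r^(2*n+1) * Real.exp (-a * r^2))) := by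
        simp_rw [key]
    _ = ∑' n : ℕ, ∫ r in Set.Ioi (0:ℝ),
          Real.exp (-γ) * (C n * (r^(2*n+1) * Real.exp (-a * r^2))) :=
        (integral_tsum_of_summable_integral_norm hint hSum).symm
    _ = ∑' n : ℕ, T n := tsum_congr hint_val
    _ = Real.exp (-γ) * (1/((k:ℝ)+1)) * Real.exp (γ/((k:ℝ)+1)) := by
        rw [hT_def, tsum_mul_left, tsum_pow_div_factorial']
    _ = 1 / ((k : ℝ) + 1) * Real.exp (-γ * k / ((k : ℝ) + 1)) := by
        rw [mul_comm (Real.exp (-γ)), mul_assoc, ← Real.exp_add]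
        congr 1
        field_simp
        ring
end

section
/- Let P and Q be Borel probability measures on ℝ with P([0, ∞)) = Q([0, ∞)) = 1, and suppose their cumulative distribution functions satisfy strict first-order stochastic dominance on the positive half-line: P((−∞, r]) > Q((−∞, r]) for every r > 0. Let g : ℝ → ℝ be bounded and strictly monotone increasing. Then ∫ g dP < ∫ g dQ. -/
open MeasureTheory

/-- A probability measure with mass 1 on `[0, ∞)` gives zero mass to `(-∞, 0)`. -/
lemma aux_Iio_zero (μ : Measure ℝ) [IsProbabilityMeasure μ] (h : μ (Set.Ici 0) = 1) :
    μ (Set.Iio 0) = 0 := by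
  have hc := measure_compl (μ := μ) (measurableSet_Ici (a := (0:ℝ))) (measure_ne_top μ _)
  rw [Set.compl_Ici] at hc
  rw [hc, h, measure_univ, tsub_self]

/-- Comparison at `Iic 0` by continuity from above. -/
lemma aux_Iic_zero (P Q : Measure ℝ) [IsProbabilityMeasure P] [IsProbabilityMeasure Q]
    (hdom : ∀ r : ℝ, 0 < r → Q (Set.Iic r) < P (Set.Iic r)) :
    Q (Set.Iic 0) ≤ P (Set.Iic 0) := by
  have hInter : (⋂ n : ℕ, Set.Iic ((1:ℝ) / (n + 1))) = Set.Iic 0 := by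
    ext x
    simp only [Set.mem_iInter, Set.mem_Iic]
    constructor
    · intro hx
      by_contra hx0
      push_neg at hx0
      obtain ⟨n, hn⟩ := exists_nat_one_div_lt hx0
      exact absurd (hx n) (not_le.mpr hn)
    · intro hx n
      exact hx.trans (by positivity)
  have hanti : ∀ (μ : Measure ℝ) [IsProbabilityMeasure μ],
      μ (Set.Iic (0:ℝ)) = ⨅ n : ℕ, μ (Set.Iic ((1:ℝ)/(n+1))) := by
    intro μ _
    rw [← hInter]
    refine Directed.measure_iInter (fun n => measurableSet_Iic.nullMeasurableSet) ?_ ?_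
    · refine Antitone.directed_ge (fun m n hmn => ?_)
      refine Set.Iic_subset_Iic.mpr ?_
      gcongr
    · exact ⟨0, measure_ne_top _ _⟩
  rw [hanti P, hanti Q]
  exact iInf_mono fun n => (hdom _ (by positivity)).le

/-- Comparison at `Iio b`, `b > 0`, by continuity from below. -/
lemma aux_Iio_lt (P Q : Measure ℝ) [IsProbabilityMeasure P] [IsProbabilityMeasure Q]
    (hdom : ∀ r : ℝ, 0 < r → Q (Set.Iic r) < P (Set.Iic r))
    {b : ℝ} (hb : 0 < b) : Q (Set.Iio b) ≤ P (Set.Iio b) := by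
  have hUnion : (⋃ n : ℕ, Set.Iic (b - b / (n + 2))) = Set.Iio b := by
    ext x
    simp only [Set.mem_iUnion, Set.mem_Iic, Set.mem_Iio]
    constructor
    · rintro ⟨n, hn⟩
      have : 0 < b / (n + 2 : ℝ) := by positivity
      linarith
    · intro hx
      obtain ⟨n, hn⟩ := exists_nat_gt (b / (b - x))
      refine ⟨n, ?_⟩
      have hbx : 0 < b - x := by linarith
      have hn2 : b / (b - x) < (n : ℝ) + 2 := by
        have : (n : ℝ) ≤ n + 2 := by linarith
        linarith
      have h3 : b < ((n:ℝ) + 2) * (b - x) := (div_lt_iff₀ hbx).mp hn2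
      have h4 : b / ((n:ℝ) + 2) < b - x :=
        (div_lt_iff₀ (by positivity : (0:ℝ) < (n:ℝ)+2)).mpr (by linarith)
      linarith
  have hmono' : ∀ (μ : Measure ℝ), μ (Set.Iio b) = ⨆ n : ℕ, μ (Set.Iic (b - b/(n+2))) := by
    intro μ
    rw [← hUnion]
    refine Directed.measure_iUnion ?_
    refine Monotone.directed_le (fun m n hmn => Set.Iic_subset_Iic.mpr ?_)
    have : b / ((n:ℝ) + 2) ≤ b / ((m:ℝ) + 2) := by
      gcongr
    linarith
  rw [hmono' P, hmono' Q]
  refine iSup_mono fun n => ?_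
  have hpos : 0 < b - b / ((n:ℝ) + 2) := by
    have h1 : b / ((n:ℝ) + 2) ≤ b / 2 := by
      have hn0 : (0:ℝ) ≤ (n:ℝ) := Nat.cast_nonneg n
      gcongr <;> linarith
    have h2 : 0 < b / 2 := by positivity
    linarith
  exact (hdom _ hpos).le

/-- A lower set gets at least as much `P`-mass as `Q`-mass. -/
lemma aux_lower (P Q : Measure ℝ) [IsProbabilityMeasure P] [IsProbabilityMeasure Q]
    (hP : P (Set.Ici 0) = 1) (hQ : Q (Set.Ici 0) = 1)
    (hdom : ∀ r : ℝ, 0 < r → Q (Set.Iic r) < P (Set.Iic r))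
    (S : Set ℝ) (hS : IsLowerSet S) : Q S ≤ P S := by
  by_cases h0 : (0:ℝ) ∈ S
  · by_cases huniv : S = Set.univ
    · simp [huniv]
    · have hub : ∃ u : ℝ, u ∉ S := by
        by_contra h
        push_neg at h
        exact huniv (Set.eq_univ_iff_forall.mpr h)
      obtain ⟨u, hu⟩ := hub
      have hbdd : BddAbove S := ⟨u, fun x hx => by
        by_contra hxu
        push_neg at hxu
        exact hu (hS hxu.le hx)⟩
      set b := sSup S with hbdef
      have hne : S.Nonempty := ⟨0, h0⟩
      have hsub : S ⊆ Set.Iic b := fun x hx => le_csSup hbdd hx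
      have hsup : Set.Iio b ⊆ S := fun x hx => by
        obtain ⟨y, hy, hxy⟩ := exists_lt_of_lt_csSup hne hx
        exact hS hxy.le hy
      have hb0 : 0 ≤ b := le_csSup hbdd h0
      by_cases hbS : b ∈ S
      · have hSeq : S = Set.Iic b := by
          apply Set.Subset.antisymm hsub
          intro x hx
          exact hS hx hbS
        rw [hSeq]
        rcases eq_or_lt_of_le hb0 with h | h
        · rw [← h]; exact aux_Iic_zero P Q hdom
        · exact (hdom b h).le
      · have hSeq : S = Set.Iio b := by
          apply Set.Subset.antisymm _ hsup
          intro x hx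
          rcases lt_or_eq_of_le (Set.mem_Iic.mp (hsub hx)) with h | h
          · exact h
          · exact absurd (h ▸ hx) hbS
        have hbpos : 0 < b := lt_of_le_of_ne hb0 (fun h => hbS (h ▸ h0))
        rw [hSeq]
        exact aux_Iio_lt P Q hdom hbpos
  · have hsub : S ⊆ Set.Iio 0 := fun x hx => by
      by_contra h
      simp only [Set.mem_Iio, not_lt] at h
      exact h0 (hS h hx)
    calc Q S ≤ Q (Set.Iio 0) := measure_mono hsub
      _ = 0 := aux_Iio_zero Q hQ
      _ ≤ P S := zero_le

/-- Strict first-order stochastic dominance on the positive half-line implies a strict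
inequality of expectations of any bounded, strictly increasing function. -/
theorem integral_lt_of_strict_stochastic_dominance
    (P Q : Measure ℝ) [IsProbabilityMeasure P] [IsProbabilityMeasure Q]
    (hP : P (Set.Ici 0) = 1) (hQ : Q (Set.Ici 0) = 1)
    (hdom : ∀ r : ℝ, 0 < r → Q (Set.Iic r) < P (Set.Iic r))
    (g : ℝ → ℝ) (hmono : StrictMono g) (hbdd : ∃ C : ℝ, ∀ x, |g x| ≤ C) :
    (∫ x, g x ∂P) < ∫ x, g x ∂Q := by
  obtain ⟨C, hC⟩ := hbdd
  set f : ℝ → ℝ := fun x => g x + C with hfdef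
  set t₀ : ℝ := g 1 + C with ht₀def
  have hgmeas : Measurable g := hmono.monotone.measurable
  have hfmeas : Measurable f := hgmeas.add_const C
  have hfnn : ∀ x, 0 ≤ f x := fun x => by
    have := abs_le.mp (hC x); simp only [hfdef]; linarith
  have hfle : ∀ x, f x ≤ 2 * C := fun x => by
    have := abs_le.mp (hC x); simp only [hfdef]; linarith
  have hfmono : Monotone f := fun x y hxy => by
    simp only [hfdef]
    exact add_le_add_left (hmono.monotone hxy) C
  have hgint : ∀ (μ : Measure ℝ) [IsProbabilityMeasure μ], Integrable g μ := by
    intro μ _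
    refine ⟨hgmeas.aestronglyMeasurable, ?_⟩
    exact HasFiniteIntegral.of_bounded (C := C)
      (Filter.Eventually.of_forall fun x => by rw [Real.norm_eq_abs]; exact hC x)
  have hfint : ∀ (μ : Measure ℝ) [IsProbabilityMeasure μ], Integrable f μ := by
    intro μ _
    exact (hgint μ).add (integrable_const C)
  have hred : ∀ (μ : Measure ℝ) [IsProbabilityMeasure μ],
      ∫ x, f x ∂μ = (∫ x, g x ∂μ) + C := by
    intro μ _
    rw [hfdef]
    rw [integral_add (hgint μ) (integrable_const C), integral_const]
    simp
  have ht₀level : {a : ℝ | f a ≤ t₀} = Set.Iic 1 := by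
    ext a
    simp only [Set.mem_setOf_eq, Set.mem_Iic, hfdef, ht₀def]
    constructor
    · intro h; exact hmono.le_iff_le.mp (by linarith)
    · intro h; have := hmono.monotone h; linarith
  have ht₀nn : 0 ≤ t₀ := by
    have := abs_le.mp (hC 1); simp only [ht₀def]; linarith
  clear_value f t₀
  -- reduce to f
  suffices h : ∫ x, f x ∂P < ∫ x, f x ∂Q by
    rw [hred P, hred Q] at h
    linarith
  -- layer cake
  have layerP : ∫ x, f x ∂P = ∫ t in Set.Ioi (0:ℝ), (P {a : ℝ | t < f a}).toReal :=
    (hfint P).integral_eq_integral_meas_lt (Filter.Eventually.of_forall hfnn)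
  have layerQ : ∫ x, f x ∂Q = ∫ t in Set.Ioi (0:ℝ), (Q {a : ℝ | t < f a}).toReal :=
    (hfint Q).integral_eq_integral_meas_lt (Filter.Eventually.of_forall hfnn)
  rw [layerP, layerQ]
  -- measurability of levels
  have hlevel : ∀ t : ℝ, MeasurableSet {a : ℝ | f a ≤ t} := fun t =>
    hfmeas measurableSet_Iic
  have hcompl : ∀ (μ : Measure ℝ) [IsProbabilityMeasure μ], ∀ t : ℝ,
      μ {a : ℝ | t < f a} = 1 - μ {a : ℝ | f a ≤ t} := by
    intro μ _ t
    have hs : {a : ℝ | t < f a} = {a : ℝ | f a ≤ t}ᶜ := by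
      ext a; simp [not_le]
    rw [hs, measure_compl (hlevel t) (measure_ne_top _ _), measure_univ]
  -- lower set comparison
  have hlow : ∀ t : ℝ, Q {a : ℝ | f a ≤ t} ≤ P {a : ℝ | f a ≤ t} := by
    intro t
    exact aux_lower P Q hP hQ hdom _ (fun x y hyx hx => le_trans (hfmono hyx) hx)
  -- pointwise comparison
  have hpt : ∀ t : ℝ, (P {a : ℝ | t < f a}).toReal ≤ (Q {a : ℝ | t < f a}).toReal := by
    intro t
    refine ENNReal.toReal_le_toReal (measure_ne_top _ _) (measure_ne_top _ _) |>.mpr ?_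
    rw [hcompl P t, hcompl Q t]
    exact tsub_le_tsub_left (hlow t) 1
  -- integrability of the tail functions
  have hmeas' : ∀ (μ : Measure ℝ), Measurable (fun t : ℝ => (μ {a : ℝ | t < f a}).toReal) := by
    intro μ
    have hanti : Antitone (fun t : ℝ => μ {a : ℝ | t < f a}) :=
      fun s t hst => measure_mono fun a ha => lt_of_le_of_lt hst ha
    exact hanti.measurable.ennreal_toReal
  have hintOn : ∀ (μ : Measure ℝ) [IsProbabilityMeasure μ],
      IntegrableOn (fun t : ℝ => (μ {a : ℝ | t < f a}).toReal) (Set.Ioi 0) := by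
    intro μ _
    have hboundint : Integrable
        (fun t : ℝ => (Set.Ioc (0:ℝ) (2*C)).indicator (fun _ => (1:ℝ)) t)
        (volume.restrict (Set.Ioi 0)) := by
      rw [integrable_indicator_iff measurableSet_Ioc]
      refine (integrableOn_const_iff (C := (1:ℝ))).mpr (Or.inr ?_)
      exact lt_of_le_of_lt (Measure.restrict_apply_le _ _) measure_Ioc_lt_top
    refine Integrable.mono' hboundint (hmeas' μ).aestronglyMeasurable ?_
    rw [ae_restrict_iff' measurableSet_Ioi]
    refine Filter.Eventually.of_forall fun t ht => ?_
    rw [Real.norm_eq_abs, abs_of_nonneg ENNReal.toReal_nonneg]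
    by_cases h2C : t ≤ 2 * C
    · rw [Set.indicator_of_mem (Set.mem_Ioc.mpr ⟨Set.mem_Ioi.mp ht, h2C⟩)]
      exact ENNReal.toReal_le_of_le_ofReal one_pos.le (by simpa using prob_le_one)
    · push_neg at h2C
      have hempty : {a : ℝ | t < f a} = ∅ := by
        ext a
        simp only [Set.mem_setOf_eq, Set.mem_empty_iff_false, iff_false, not_lt]
        exact (hfle a).trans h2C.le
      rw [hempty, measure_empty]
      simp [Set.indicator_nonneg]
  -- strict inequality on a small interval
  set B : ℕ → Set ℝ := fun n => {a : ℝ | f a ≤ t₀ + 1/((n:ℝ)+1)} with hBdef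
  have hBInter : (⋂ n : ℕ, B n) = Set.Iic 1 := by
    rw [← ht₀level]
    ext a
    simp only [hBdef, Set.mem_iInter, Set.mem_setOf_eq]
    constructor
    · intro h
      by_contra hh
      push_neg at hh
      obtain ⟨n, hn⟩ := exists_nat_one_div_lt (sub_pos.mpr hh)
      have := h n
      linarith
    · intro h n
      have : (0:ℝ) < 1/((n:ℝ)+1) := by positivity
      linarith
  have hBinf : Q (Set.Iic 1) = ⨅ n : ℕ, Q (B n) := by
    rw [← hBInter]
    refine Directed.measure_iInter (fun n => ?_) ?_ ⟨0, measure_ne_top _ _⟩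
    · rw [hBdef]
      exact (hlevel _).nullMeasurableSet
    · refine Antitone.directed_ge fun m n hmn => ?_
      intro a ha
      simp only [hBdef, Set.mem_setOf_eq] at ha ⊢
      have h1 : (1:ℝ)/((n:ℝ)+1) ≤ 1/((m:ℝ)+1) := by gcongr
      linarith
  have hex : ∃ n : ℕ, Q (B n) < P (Set.Iic 1) := by
    rw [← iInf_lt_iff, ← hBinf]
    exact hdom 1 one_pos
  obtain ⟨n, hn⟩ := hex
  set t₁ : ℝ := t₀ + 1/((n:ℝ)+1) with ht₁def
  have ht₀₁ : t₀ < t₁ := by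
    have h0 : (0:ℝ) < 1/((n:ℝ)+1) := by positivity
    rw [ht₁def]
    linarith
  have hBn : B n = {a : ℝ | f a ≤ t₁} := by rw [hBdef, ht₁def]
  clear_value t₁
  set ε : ℝ := (P (Set.Iic 1)).toReal - (Q (B n)).toReal with hεdef
  have hεpos : 0 < ε := by
    rw [hεdef]
    have := (ENNReal.toReal_lt_toReal (measure_ne_top _ _) (measure_ne_top _ _)).mpr hn
    linarith
  clear_value ε
  -- on Ioc t₀ t₁, the gap is at least ε
  have hgap : ∀ t ∈ Set.Ioc t₀ t₁,
      ε ≤ (Q {a : ℝ | t < f a}).toReal - (P {a : ℝ | t < f a}).toReal := by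
    intro t ht
    have e1 : (P {a : ℝ | t < f a}).toReal = 1 - (P {a : ℝ | f a ≤ t}).toReal := by
      rw [hcompl P t, ENNReal.toReal_sub_of_le prob_le_one ENNReal.one_ne_top]
      simp
    have e2 : (Q {a : ℝ | t < f a}).toReal = 1 - (Q {a : ℝ | f a ≤ t}).toReal := by
      rw [hcompl Q t, ENNReal.toReal_sub_of_le prob_le_one ENNReal.one_ne_top]
      simp
    have hsub1 : Set.Iic 1 ⊆ {a : ℝ | f a ≤ t} := by
      rw [← ht₀level]
      intro a ha
      simp only [Set.mem_setOf_eq] at ha ⊢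
      linarith [ht.1]
    have hsub2 : {a : ℝ | f a ≤ t} ⊆ B n := by
      rw [hBn]
      intro a ha
      simp only [Set.mem_setOf_eq] at ha ⊢
      linarith [ht.2]
    have h1 : (P (Set.Iic 1)).toReal ≤ (P {a : ℝ | f a ≤ t}).toReal :=
      (ENNReal.toReal_le_toReal (measure_ne_top _ _) (measure_ne_top _ _)).mpr
        (measure_mono hsub1)
    have h2 : (Q {a : ℝ | f a ≤ t}).toReal ≤ (Q (B n)).toReal :=
      (ENNReal.toReal_le_toReal (measure_ne_top _ _) (measure_ne_top _ _)).mpr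
        (measure_mono hsub2)
    rw [e1, e2, hεdef]
    linarith
  -- final assembly
  have hdiffint : IntegrableOn
      (fun t => (Q {a : ℝ | t < f a}).toReal - (P {a : ℝ | t < f a}).toReal)
      (Set.Ioi 0) volume := (hintOn Q).sub (hintOn P)
  have hpos : 0 < ∫ t in Set.Ioi (0:ℝ),
      ((Q {a : ℝ | t < f a}).toReal - (P {a : ℝ | t < f a}).toReal) := by
    have hsubset : Set.Ioc t₀ t₁ ⊆ Set.Ioi 0 := fun t ht => lt_of_le_of_lt ht₀nn ht.1
    have step1 : ε * (volume (Set.Ioc t₀ t₁)).toReal ≤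
        ∫ t in Set.Ioc t₀ t₁,
          ((Q {a : ℝ | t < f a}).toReal - (P {a : ℝ | t < f a}).toReal) :=
      setIntegral_ge_of_const_le_real measurableSet_Ioc measure_Ioc_lt_top.ne hgap
        (hdiffint.mono_set hsubset)
    have step2 : (∫ t in Set.Ioc t₀ t₁,
          ((Q {a : ℝ | t < f a}).toReal - (P {a : ℝ | t < f a}).toReal)) ≤
        ∫ t in Set.Ioi (0:ℝ),
          ((Q {a : ℝ | t < f a}).toReal - (P {a : ℝ | t < f a}).toReal) := by
      refine setIntegral_mono_set hdiffint ?_ (HasSubset.Subset.eventuallyLE hsubset)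
      exact Filter.Eventually.of_forall fun t => sub_nonneg.mpr (hpt t)
    have hvol : 0 < (volume (Set.Ioc t₀ t₁)).toReal := by
      rw [Real.volume_Ioc, ENNReal.toReal_ofReal (by linarith)]
      linarith
    calc (0:ℝ) < ε * (volume (Set.Ioc t₀ t₁)).toReal := by positivity
      _ ≤ _ := step1
      _ ≤ _ := step2
  have hsplit := integral_sub ((hintOn Q)) ((hintOn P))
  rw [hsplit] at hpos
  linarith
end
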